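/- arXiv:2311.06326 — 11 statements merged into one kernel-verified Lean document; each statement's English description precedes it below -/
import Mathlib

section
/- There do not exist pairwise distinct primes a, b, c, d, e, f such that all six rows, all six columns, and both long diagonals of the 6×6 array with rows (a^7, a·d·e·f, b^4, b·d, c^3, 1), (b^2·e, c, a^5·b, a^2·b·f, d^2, a·b·c^2), (b·c, a^2, c^2·d^2, a^4·b·e, a·b·f, a·b^2), (b^2·d, a^2·c^2, a^2·c·f, b^2, a^3·b·e, a·d), (a·d·f, a^2·b^4, e, a·c^2, b, a^4·c·d), (c^2, a·b·d, a, a·c·d, a^4·b^2, a·b^2·e·f) all have the same sum. -/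
/-- The 6×6 square form from Figure 3, as a matrix in the (would-be) primes
`a, b, c, d, e, f`. -/
def squareForm (a b c d e f : ℕ) : Matrix (Fin 6) (Fin 6) ℕ :=
  !![a^7,     a*d*e*f, b^4,     b*d,     c^3,     1;
     b^2*e,   c,       a^5*b,   a^2*b*f, d^2,     a*b*c^2;
     b*c,     a^2,     c^2*d^2, a^4*b*e, a*b*f,   a*b^2;
     b^2*d,   a^2*c^2, a^2*c*f, b^2,     a^3*b*e, a*d;
     a*d*f,   a^2*b^4, e,       a*c^2,   b,       a^4*c*d;
     c^2,     a*b*d,   a,       a*c*d,   a^4*b^2, a*b^2*e*f]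


private lemma consValFive {α : Type*} {m : ℕ} (x : α) (u : Fin (m+5) → α) :
    Matrix.vecCons x u 5 = u 4 := rfl

private lemma consValLast5 {α : Type*} (x : α) (u : Fin 5 → α) :
    Matrix.vecCons x u (Fin.last 5) = u 4 := rfl

private lemma revA : Fin.rev (1 : Fin 6) = 4 := rfl
private lemma revB : Fin.rev (2 : Fin 6) = 3 := rfl
private lemma revC : Fin.rev (3 : Fin 6) = 2 := rfl
private lemma revD : Fin.rev (4 : Fin 6) = 1 := rfl
private lemma revE : Fin.rev (5 : Fin 6) = 0 := rfl

private lemma sumR4 (a b c d e f : ℕ) :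
    ∑ j, squareForm a b c d e f 4 j = a*d*f + a^2*b^4 + e + a*c^2 + b + a^4*c*d := by
  simp [squareForm, Fin.sum_univ_six, Matrix.cons_val_zero, Matrix.cons_val_one,
    Matrix.cons_val_two, Matrix.cons_val_three, Matrix.cons_val_four, consValFive,
    consValLast5, Matrix.vecHead, Matrix.vecTail]

private lemma sumC1 (a b c d e f : ℕ) :
    ∑ i, squareForm a b c d e f i 1 = a*d*e*f + c + a^2 + a^2*c^2 + a^2*b^4 + a*b*d := by
  simp [squareForm, Fin.sum_univ_six, Matrix.cons_val_zero, Matrix.cons_val_one,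
    Matrix.cons_val_two, Matrix.cons_val_three, Matrix.cons_val_four, consValFive,
    consValLast5, Matrix.vecHead, Matrix.vecTail]

private lemma sumC4 (a b c d e f : ℕ) :
    ∑ i, squareForm a b c d e f i 4 = c^3 + d^2 + a*b*f + a^3*b*e + b + a^4*b^2 := by
  simp [squareForm, Fin.sum_univ_six, Matrix.cons_val_zero, Matrix.cons_val_one,
    Matrix.cons_val_two, Matrix.cons_val_three, Matrix.cons_val_four, consValFive,
    consValLast5, Matrix.vecHead, Matrix.vecTail]

private lemma sumC5 (a b c d e f : ℕ) :
    ∑ i, squareForm a b c d e f i 5 = 1 + a*b*c^2 + a*b^2 + a*d + a^4*c*d + a*b^2*e*f := by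
  simp [squareForm, Fin.sum_univ_six, Matrix.cons_val_zero, Matrix.cons_val_one,
    Matrix.cons_val_two, Matrix.cons_val_three, Matrix.cons_val_four, consValFive,
    consValLast5, Matrix.vecHead, Matrix.vecTail]

private lemma sumD2 (a b c d e f : ℕ) :
    ∑ i : Fin 6, squareForm a b c d e f i i.rev
      = 1 + d^2 + a^4*b*e + a^2*c*f + a^2*b^4 + c^2 := by
  simp [squareForm, Fin.sum_univ_six, revA, revB, revC, revD, revE,
    Matrix.cons_val_zero, Matrix.cons_val_one,
    Matrix.cons_val_two, Matrix.cons_val_three, Matrix.cons_val_four, consValFive,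
    consValLast5, Matrix.vecHead, Matrix.vecTail]

/-- There are no pairwise distinct primes `a, b, c, d, e, f` making all rows,
columns and long diagonals of the square form have the same sum. -/
theorem no_additive_assignment_for_square_form :
    ¬ ∃ a b c d e f : ℕ,
      a.Prime ∧ b.Prime ∧ c.Prime ∧ d.Prime ∧ e.Prime ∧ f.Prime ∧
      a ≠ b ∧ a ≠ c ∧ a ≠ d ∧ a ≠ e ∧ a ≠ f ∧
      b ≠ c ∧ b ≠ d ∧ b ≠ e ∧ b ≠ f ∧
      c ≠ d ∧ c ≠ e ∧ c ≠ f ∧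
      d ≠ e ∧ d ≠ f ∧ e ≠ f ∧
      ∃ S : ℕ,
        (∀ i : Fin 6, ∑ j, squareForm a b c d e f i j = S) ∧
        (∀ j : Fin 6, ∑ i, squareForm a b c d e f i j = S) ∧
        (∑ i : Fin 6, squareForm a b c d e f i i = S) ∧
        (∑ i : Fin 6, squareForm a b c d e f i i.rev = S) := by

  rintro ⟨a, b, c, d, e, f, ha, hb, hc, hd, he, hf,
    hab, hac, had, hae, haf, hbc, hbd, hbe, hbf, hcd, hce, hcf, hde, hdf, hef,
    S, hrow, hcol, hD1, hD2⟩
  have hR4 := (sumR4 a b c d e f).symm.trans (hrow 4)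
  have hC1 := (sumC1 a b c d e f).symm.trans (hcol 1)
  have hC4 := (sumC4 a b c d e f).symm.trans (hcol 4)
  have hC5 := (sumC5 a b c d e f).symm.trans (hcol 5)
  have hDD := (sumD2 a b c d e f).symm.trans hD2
  have h0 : (a : ZMod a) = 0 := ZMod.natCast_self a
  have E1 := congrArg (fun n : ℕ => (n : ZMod a)) hC1
  have E2 := congrArg (fun n : ℕ => (n : ZMod a)) hC5
  have E3 := congrArg (fun n : ℕ => (n : ZMod a)) hC4
  have E4 := congrArg (fun n : ℕ => (n : ZMod a)) hDD
  have E5 := congrArg (fun n : ℕ => (n : ZMod a)) hR4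
  push_cast at E1 E2 E3 E4 E5
  simp only [h0, zero_mul, mul_zero, zero_add, add_zero, zero_pow, ne_eq,
    OfNat.ofNat_ne_zero, not_false_iff] at E1 E2 E3 E4 E5
  have hea : (e : ZMod a) = 0 := by
    linear_combination E5 - E3 + E4 - E2 + (c : ZMod a)^2 * E1 - (c : ZMod a)^2 * E2
  have hdvd : a ∣ e := (ZMod.natCast_eq_zero_iff e a).mp hea
  exact hae ((Nat.prime_dvd_prime_iff_eq ha he).mp hdvd)
end

section
/- Let X and Y be disjoint finite sets of positive integers with X nonempty, and let f : X → Y be a function such that (a) every x ∈ X divides f(x), and (b) for every y ∈ Y that has at least two preimages under f, every preimage x of y satisfies v_p(x) < v_p(y) for every prime p dividing y. Then ∑_{x∈X} x < ∑_{y∈Y} y. In particular, X and Y cannot have the same sum. -/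
/-!
Group `X` into the fibres of `f`; it suffices that every nonempty fibre sums to less than its
image `y`. A single preimage is a proper divisor of `y`, as `X` and `Y` are disjoint. When there
are several, `v_p x < v_p y` says that each of them divides `m = y / rad y`, and then
`σ(m) = ∏ (1 + p + ⋯ + p^a) < ∏ p^(a+1) = m · rad m ≤ y`.
-/

open Finset

namespace Nat

theorem sum_divisors_lt_mul_prod_primeFactors {m : ℕ} (hm : 1 < m) :
    ∑ d ∈ m.divisors, d < m * ∏ p ∈ m.primeFactors, p := by
  have hm0 : m ≠ 0 := by omega
  have hmul : m * ∏ p ∈ m.primeFactors, p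
      = ∏ p ∈ m.primeFactors, p ^ (m.factorization p + 1) := by
    have hm' := prod_factorization_pow_eq_self hm0
    rw [Finsupp.prod, support_factorization] at hm'
    nth_rewrite 1 [← hm']
    simp only [← prod_mul_distrib, pow_succ]
  rw [sum_divisors hm0, hmul]
  refine prod_lt_prod_of_nonempty (fun p hp => ?_) (fun p hp => ?_)
    (nonempty_primeFactors.2 hm)
  · exact sum_pos (fun k _ => pow_pos (prime_of_mem_primeFactors hp).pos _) ⟨0, by simp⟩
  · exact geomSum_lt (prime_of_mem_primeFactors hp).two_le fun k hk => mem_range.mp hk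

theorem mul_prod_primeFactors_dvd {x y : ℕ} (hy : y ≠ 0) (hxy : x ∣ y)
    (hval : ∀ p, p.Prime → p ∣ y → x.factorization p < y.factorization p) :
    x * ∏ p ∈ y.primeFactors, p ∣ y := by
  have hquot : y / x ≠ 0 := fun h => hy (by rw [← Nat.div_mul_cancel hxy, h, zero_mul])
  refine mul_dvd_of_dvd_div hxy ((prod_primeFactors_dvd_iff hquot).2 fun p hp => ?_)
  obtain ⟨hp, hpy, -⟩ := mem_primeFactors.1 hp
  have hlt := hval p hp hpy
  refine mem_primeFactors.2 ⟨hp, (hp.dvd_iff_one_le_factorization hquot).2 ?_, hquot⟩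
  rw [factorization_div hxy, Finsupp.tsub_apply]
  omega

end Nat

theorem sum_lt_of_forall_dvd_of_nontrivial {S : Finset ℕ} {y : ℕ} (hy : 0 < y)
    (hS : S.Nontrivial) (hdvd : ∀ x ∈ S, x ∣ y)
    (hval : ∀ x ∈ S, ∀ p, p.Prime → p ∣ y → x.factorization p < y.factorization p) :
    ∑ x ∈ S, x < y := by
  set r := ∏ p ∈ y.primeFactors, p
  set m := y / r
  have hry : r ∣ y := Nat.prod_primeFactors_dvd y
  have hmy : m * r = y := Nat.div_mul_cancel hry
  have hm0 : m ≠ 0 := fun hm => by simp [← hmy, hm] at hy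
  have hsub : S ⊆ m.divisors := fun x hx => Nat.mem_divisors.2
    ⟨Nat.dvd_div_of_mul_dvd (mul_comm x r ▸ Nat.mul_prod_primeFactors_dvd hy.ne' (hdvd x hx)
      (hval x hx)), hm0⟩
  have hm : 1 < m := by
    refine Nat.one_lt_iff_ne_zero_and_ne_one.2 ⟨hm0, fun hm1 => ?_⟩
    rw [hm1, Nat.divisors_one] at hsub
    exact hS.not_subset_singleton hsub
  calc ∑ x ∈ S, x ≤ ∑ d ∈ m.divisors, d := sum_le_sum_of_subset hsub
    _ < m * ∏ p ∈ m.primeFactors, p := Nat.sum_divisors_lt_mul_prod_primeFactors hm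
    _ ≤ m * r := Nat.mul_le_mul_left m <| Nat.le_of_dvd (Nat.pos_of_dvd_of_pos hry hy) <|
        prod_dvd_prod_of_subset _ _ _ (Nat.primeFactors_mono (Nat.div_dvd_of_dvd hry) hy.ne')
    _ = y := hmy

theorem sum_lt_of_forall_dvd {S : Finset ℕ} {y : ℕ} (hy : 0 < y) (hS : S.Nonempty)
    (hyS : y ∉ S) (hdvd : ∀ x ∈ S, x ∣ y)
    (hval : S.Nontrivial → ∀ x ∈ S, ∀ p, p.Prime → p ∣ y → x.factorization p < y.factorization p) :
    ∑ x ∈ S, x < y := by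
  rcases hS.exists_eq_singleton_or_nontrivial with ⟨x, rfl⟩ | hnt
  · have hx : x ∣ y := hdvd x (mem_singleton_self x)
    rw [sum_singleton]
    exact lt_of_le_of_ne (Nat.le_of_dvd hy hx) fun h => hyS (h ▸ mem_singleton_self x)
  · exact sum_lt_of_forall_dvd_of_nontrivial hy hnt hdvd (hval hnt)

theorem sum_lt_sum_of_dominating_map_general
    (X Y : Finset ℕ) (hXY : Disjoint X Y) (hX : X.Nonempty)
    (hYpos : ∀ y ∈ Y, 0 < y)
    (f : ℕ → ℕ) (hf : ∀ x ∈ X, f x ∈ Y)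
    (hdvd : ∀ x ∈ X, x ∣ f x)
    (hval : ∀ y ∈ Y,
      (∃ x₁ ∈ X, ∃ x₂ ∈ X, x₁ ≠ x₂ ∧ f x₁ = y ∧ f x₂ = y) →
      ∀ x ∈ X, f x = y →
        ∀ q : ℕ, q.Prime → q ∣ y → x.factorization q < y.factorization q) :
    ∑ x ∈ X, x < ∑ y ∈ Y, y := by
  have hfiber : ∀ y ∈ Y, {x ∈ X | f x = y}.Nonempty → ∑ x ∈ X with f x = y, x < y := by
    intro y hy hne
    refine sum_lt_of_forall_dvd (hYpos y hy) hne
      (fun hyX => disjoint_left.1 hXY (mem_filter.1 hyX).1 hy) (fun x hx => ?_)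
      fun hnt x hx => hval y hy ?_ x (mem_filter.1 hx).1 (mem_filter.1 hx).2
    · obtain ⟨hxX, rfl⟩ := mem_filter.1 hx
      exact hdvd x hxX
    · obtain ⟨a, ha, b, hb, hab⟩ := hnt
      simp only [mem_coe, mem_filter] at ha hb
      exact ⟨a, ha.1, b, hb.1, hab, ha.2, hb.2⟩
  rw [← sum_fiberwise_of_maps_to hf fun x => x]
  obtain ⟨x₀, hx₀⟩ := hX
  refine sum_lt_sum (fun y hy => ?_)
    ⟨f x₀, hf x₀ hx₀, hfiber _ (hf x₀ hx₀) ⟨x₀, mem_filter.2 ⟨hx₀, rfl⟩⟩⟩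
  rcases {x ∈ X | f x = y}.eq_empty_or_nonempty with h | h
  · simp [h]
  · exact (hfiber y hy h).le

/-- If `X` and `Y` are disjoint finite sets of positive integers, `X` is
nonempty, and `f` maps `X` into `Y` with (a) every `x ∈ X` dividing `f x`, and
(b) whenever `y ∈ Y` has at least two preimages, every preimage `x` of `y`
satisfies `v_p x < v_p y` for every prime `p ∣ y`, then the sum of `X` is
strictly less than the sum of `Y`. -/
theorem sum_lt_sum_of_dominating_map
    (X Y : Finset ℕ) (hXY : Disjoint X Y) (hX : X.Nonempty)
    (hXpos : ∀ x ∈ X, 0 < x) (hYpos : ∀ y ∈ Y, 0 < y)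
    (f : ℕ → ℕ) (hf : ∀ x ∈ X, f x ∈ Y)
    (hdvd : ∀ x ∈ X, x ∣ f x)
    (hval : ∀ y ∈ Y,
      (∃ x₁ ∈ X, ∃ x₂ ∈ X, x₁ ≠ x₂ ∧ f x₁ = y ∧ f x₂ = y) →
      ∀ x ∈ X, f x = y →
        ∀ q : ℕ, q.Prime → q ∣ y → x.factorization q < y.factorization q) :
    ∑ x ∈ X, x < ∑ y ∈ Y, y :=
  sum_lt_sum_of_dominating_map_general X Y hXY hX hYpos f hf hdvd hval
end

section
/- Let n ≥ 1 and let A be an n×n array of integers in which every row, every column, and both long diagonals have the same sum S. The strips of A are its n rows, its n columns, and its two long diagonals. Let w₁ and w₂ be functions assigning a nonnegative integer multiplicity to each strip, with equal total multiplicity ∑_s w₁(s) = ∑_s w₂(s). For a cell c, let t₁(c) (respectively t₂(c)) be the sum of w₁(s) (respectively w₂(s)) over all strips s containing c, and suppose |t₁(c) − t₂(c)| ≤ 1 for every cell c. Let X = {c : t₁(c) = t₂(c)+1} and Y = {c : t₂(c) = t₁(c)+1}. Then ∑_{c∈X} A(c) = ∑_{c∈Y} A(c); that is, the two pairwise zones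 X and Y have the same sum. -/
/-- The strips of an `n × n` square: the `n` rows, the `n` columns, and the two
long diagonals, as finite sets of cells. -/
def strip (n : ℕ) : Fin n ⊕ Fin n ⊕ Fin 2 → Finset (Fin n × Fin n)
  | Sum.inl i => Finset.univ.filter fun c => c.1 = i
  | Sum.inr (Sum.inl j) => Finset.univ.filter fun c => c.2 = j
  | Sum.inr (Sum.inr k) =>
      if k = 0 then Finset.univ.filter fun c => c.2 = c.1
      else Finset.univ.filter fun c => c.2 = c.1.rev

lemma key_sum (n : ℕ) (A : Fin n → Fin n → ℤ) (S : ℤ)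
    (hmagic : ∀ s : Fin n ⊕ Fin n ⊕ Fin 2, ∑ c ∈ strip n s, A c.1 c.2 = S)
    (w : Fin n ⊕ Fin n ⊕ Fin 2 → ℕ) :
    ∑ c : Fin n × Fin n,
      ((∑ s ∈ Finset.univ.filter (fun s => c ∈ strip n s), w s : ℕ) : ℤ) * A c.1 c.2
      = ((∑ s, w s : ℕ) : ℤ) * S := by
  have h1 : ∀ c : Fin n × Fin n,
      ((∑ s ∈ Finset.univ.filter (fun s => c ∈ strip n s), w s : ℕ) : ℤ) * A c.1 c.2
      = ∑ s : Fin n ⊕ Fin n ⊕ Fin 2,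
          (if c ∈ strip n s then (w s : ℤ) * A c.1 c.2 else 0) := by
    intro c
    rw [Finset.sum_filter]
    push_cast
    rw [Finset.sum_mul]
    congr 1
    ext s
    split <;> simp
  calc ∑ c : Fin n × Fin n,
      ((∑ s ∈ Finset.univ.filter (fun s => c ∈ strip n s), w s : ℕ) : ℤ) * A c.1 c.2
      = ∑ c : Fin n × Fin n, ∑ s : Fin n ⊕ Fin n ⊕ Fin 2,
          (if c ∈ strip n s then (w s : ℤ) * A c.1 c.2 else 0) := by
        exact Finset.sum_congr rfl fun c _ => h1 c
    _ = ∑ s : Fin n ⊕ Fin n ⊕ Fin 2, ∑ c : Fin n × Fin n,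
          (if c ∈ strip n s then (w s : ℤ) * A c.1 c.2 else 0) := Finset.sum_comm
    _ = ∑ s : Fin n ⊕ Fin n ⊕ Fin 2, (w s : ℤ) * S := by
        refine Finset.sum_congr rfl fun s _ => ?_
        rw [← hmagic s, Finset.sum_ite_mem, Finset.univ_inter, Finset.mul_sum]
    _ = ((∑ s, w s : ℕ) : ℤ) * S := by push_cast; rw [Finset.sum_mul]

/-- If every strip of a magic square has sum `S`, and `w₁, w₂` are multiplicity
assignments on strips with equal total multiplicity such that the induced cell
multiplicities `t₁, t₂` differ by at most one at each cell, then the two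
pairwise zones `X = {c : t₁ c = t₂ c + 1}` and `Y = {c : t₂ c = t₁ c + 1}`
have the same sum. -/
theorem pairwise_zones_sum_eq
    (n : ℕ) (hn : 1 ≤ n) (A : Fin n → Fin n → ℤ) (S : ℤ)
    (hmagic : ∀ s : Fin n ⊕ Fin n ⊕ Fin 2, ∑ c ∈ strip n s, A c.1 c.2 = S)
    (w₁ w₂ : Fin n ⊕ Fin n ⊕ Fin 2 → ℕ)
    (htot : ∑ s, w₁ s = ∑ s, w₂ s)
    (t₁ t₂ : Fin n × Fin n → ℕ)
    (ht₁ : ∀ c, t₁ c = ∑ s ∈ Finset.univ.filter (fun s => c ∈ strip n s), w₁ s)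
    (ht₂ : ∀ c, t₂ c = ∑ s ∈ Finset.univ.filter (fun s => c ∈ strip n s), w₂ s)
    (hdiff : ∀ c : Fin n × Fin n, t₁ c ≤ t₂ c + 1 ∧ t₂ c ≤ t₁ c + 1) :
    ∑ c ∈ Finset.univ.filter (fun c => t₁ c = t₂ c + 1), A c.1 c.2 =
      ∑ c ∈ Finset.univ.filter (fun c => t₂ c = t₁ c + 1), A c.1 c.2 := by
  have hz : ∑ c : Fin n × Fin n, ((t₁ c : ℤ) - (t₂ c : ℤ)) * A c.1 c.2 = 0 := by
    have e1 := key_sum n A S hmagic w₁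
    have e2 := key_sum n A S hmagic w₂
    have : ∑ c : Fin n × Fin n, ((t₁ c : ℤ) - (t₂ c : ℤ)) * A c.1 c.2
        = ∑ c : Fin n × Fin n, ((t₁ c : ℤ) * A c.1 c.2 - (t₂ c : ℤ) * A c.1 c.2) := by
      refine Finset.sum_congr rfl fun c _ => ?_; ring
    rw [this, Finset.sum_sub_distrib]
    simp only [ht₁, ht₂] at *
    rw [e1, e2, htot, sub_self]
  have hsplit : ∑ c : Fin n × Fin n, ((t₁ c : ℤ) - (t₂ c : ℤ)) * A c.1 c.2
      = ∑ c : Fin n × Fin n, ((if t₁ c = t₂ c + 1 then A c.1 c.2 else 0)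
          - (if t₂ c = t₁ c + 1 then A c.1 c.2 else 0)) := by
    refine Finset.sum_congr rfl fun c _ => ?_
    obtain ⟨h1, h2⟩ := hdiff c
    rcases eq_or_ne (t₁ c) (t₂ c + 1) with h | h
    · have h' : ¬ (t₂ c = t₁ c + 1) := by omega
      rw [if_pos h, if_neg h', sub_zero, h]; push_cast; ring
    · rcases eq_or_ne (t₂ c) (t₁ c + 1) with h3 | h3
      · rw [if_neg h, if_pos h3, zero_sub, h3]; push_cast; ring
      · have : t₁ c = t₂ c := by omega
        simp [h, h3, this]
  rw [hsplit, Finset.sum_sub_distrib] at hz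
  rw [Finset.sum_filter, Finset.sum_filter]
  linarith
end

section
/- Let n ∈ {5, 6}. There is no n×n additive-multiplicative magic square of distinct positive integers with magic product P that contains an entry E such that P/E is a prime power, i.e., P/E = p^k for some prime p and some integer k ≥ 1. -/
/-!
Let `E` be an entry with `P = E * p ^ k`. The other entries of its row multiply to `p ^ k`, so
they are distinct powers of `p`, and so are the other entries of its column. Both collections sum
to `S - E`, and a finite set of powers of `p` is determined by its sum (uniqueness of base-`p`
expansions), so the two collections coincide. But they are disjoint, as all entries are distinct.
-/

/-- `A` is an `n × n` additive-multiplicative magic square of pairwise distinct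
positive integers, with magic sum `S` and magic product `P`: every row, every
column, and both long diagonals have sum `S` and product `P`. -/
def IsAddMulMagicSquare (n : ℕ) (A : Fin n → Fin n → ℕ) (S P : ℕ) : Prop :=
  (∀ i j, 0 < A i j) ∧
  (Function.Injective fun c : Fin n × Fin n => A c.1 c.2) ∧
  (∀ i, ∑ j, A i j = S) ∧
  (∀ j, ∑ i, A i j = S) ∧
  (∑ i, A i i = S) ∧
  (∑ i, A i i.rev = S) ∧
  (∀ i, ∏ j, A i j = P) ∧
  (∀ j, ∏ i, A i j = P) ∧
  (∏ i, A i i = P) ∧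
  (∏ i, A i i.rev = P)

open Finset

namespace Finset

theorem image_pow_image_log {p : ℕ} (hp : 1 < p) {X : Finset ℕ}
    (hX : ∀ x ∈ X, ∃ a, p ^ a = x) : (X.image (Nat.log p)).image (p ^ ·) = X := by
  rw [image_image]
  refine (image_congr fun x hx => ?_).trans image_id
  obtain ⟨a, rfl⟩ := hX x hx
  simp [Nat.log_pow hp]

theorem eq_of_sum_eq_of_forall_eq_pow {p : ℕ} (hp : 2 ≤ p) {X Y : Finset ℕ}
    (hX : ∀ x ∈ X, ∃ a, p ^ a = x) (hY : ∀ y ∈ Y, ∃ a, p ^ a = y)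
    (h : ∑ x ∈ X, x = ∑ y ∈ Y, y) : X = Y := by
  have sum_image_pow (Z : Finset ℕ) : ∑ z ∈ Z.image (p ^ ·), z = ∑ a ∈ Z, p ^ a :=
    sum_image fun a _ b _ hab => Nat.pow_right_injective hp hab
  rw [← image_pow_image_log hp hX, ← image_pow_image_log hp hY] at h ⊢
  rw [sum_image_pow, sum_image_pow] at h
  rw [geomSum_injective hp h]

section Line

variable {ι : Type*} [Fintype ι] [DecidableEq ι] {f : ι → ℕ} {i : ι}

theorem forall_mem_image_erase_eq_pow {p k : ℕ} (hp : p.Prime) (hfi : 0 < f i)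
    (h : ∏ j, f j = f i * p ^ k) : ∀ x ∈ (univ.erase i).image f, ∃ a, p ^ a = x := by
  have hrest : ∏ j ∈ univ.erase i, f j = p ^ k :=
    Nat.eq_of_mul_eq_mul_left hfi (by rw [mul_prod_erase _ _ (mem_univ i), h])
  intro x hx
  obtain ⟨j, hj, rfl⟩ := mem_image.1 hx
  obtain ⟨a, -, ha⟩ := (Nat.dvd_prime_pow hp).1 (hrest ▸ dvd_prod_of_mem f hj)
  exact ⟨a, ha.symm⟩

theorem add_sum_image_erase (hf : Function.Injective f) :
    f i + ∑ x ∈ (univ.erase i).image f, x = ∑ j, f j := by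
  rw [sum_image hf.injOn, add_sum_erase _ _ (mem_univ i)]

end Line

theorem disjoint_image_erase_row_col {m n : Type*} [DecidableEq m] [DecidableEq n]
    [Fintype m] [Fintype n] {A : m → n → ℕ} (hA : Function.Injective fun c : m × n => A c.1 c.2)
    (i : m) (j : n) :
    Disjoint ((univ.erase j).image (A i)) ((univ.erase i).image (A · j)) := by
  rw [disjoint_left]
  rintro _ hrow hcol
  obtain ⟨j', -, rfl⟩ := mem_image.1 hrow
  obtain ⟨i', hi', h⟩ := mem_image.1 hcol
  exact (mem_erase.1 hi').1 (congrArg Prod.fst (@hA (i', j) (i, j') h))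

end Finset

/-- No 5×5 or 6×6 additive-multiplicative magic square of distinct positive
integers has an entry `E` with `P / E` a prime power. -/
theorem no_magic_square_with_prime_power_complement
    (n : ℕ) (hn : n = 5 ∨ n = 6) :
    ¬ ∃ (A : Fin n → Fin n → ℕ) (S P : ℕ) (i j : Fin n) (p k : ℕ),
      IsAddMulMagicSquare n A S P ∧ p.Prime ∧ 1 ≤ k ∧ P = A i j * p ^ k := by
  rintro ⟨A, S, P, i, j, p, k, ⟨hpos, hinj, hrow, hcol, -, -, hprow, hpcol, -, -⟩, hp, -, hP⟩
  have hrowInj : Function.Injective (A i) :=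
    fun _ _ h => congrArg Prod.snd (@hinj (i, _) (i, _) h)
  have hcolInj : Function.Injective (A · j) :=
    fun _ _ h => congrArg Prod.fst (@hinj (_, j) (_, j) h)
  have hrest : (univ.erase j).image (A i) = (univ.erase i).image (A · j) := by
    refine eq_of_sum_eq_of_forall_eq_pow hp.two_le
      (forall_mem_image_erase_eq_pow hp (hpos i j) (hP ▸ hprow i))
      (forall_mem_image_erase_eq_pow hp (hpos i j) (hP ▸ hpcol j)) ?_
    have hrowSum := add_sum_image_erase (i := j) hrowInj
    have hcolSum := add_sum_image_erase (i := i) hcolInj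
    rw [hrow] at hrowSum
    rw [hcol] at hcolSum
    omega
  have hempty := (disjoint_self_iff_empty _).1 (hrest ▸ disjoint_image_erase_row_col hinj i j)
  have : Nontrivial (Fin n) := Fin.nontrivial_iff_two_le.2 (by omega)
  exact (univ_nontrivial.erase_nonempty.image _).ne_empty hempty
end

section
/- Let n ∈ {5, 6}, let A be an n×n additive-multiplicative magic square of distinct positive integers with magic product P, and let p be a prime dividing P. Let k be the minimum of v_p(E) over all entries E of A. Then at least four entries E of A satisfy v_p(E) = k. -/
/-- In a 5×5 or 6×6 additive-multiplicative magic square of distinct positive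
integers with magic product `P`, any prime `p` dividing `P` attains its minimum
`p`-adic valuation `k` among the entries at least four times. -/
theorem min_valuation_attained_four_times
    (n : ℕ) (hn : n = 5 ∨ n = 6)
    (A : Fin n → Fin n → ℕ) (S P : ℕ)
    (hA : IsAddMulMagicSquare n A S P)
    (p : ℕ) (hp : p.Prime) (hpP : p ∣ P)
    (k : ℕ)
    (hmin : ∀ i j, k ≤ (A i j).factorization p)
    (hatt : ∃ i j, (A i j).factorization p = k) :
    4 ≤ ((Finset.univ : Finset (Fin n × Fin n)).filter
        fun c => (A c.1 c.2).factorization p = k).card := by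
  obtain ⟨hpos, hinj, hrow, hcol, hd1, hd2, hProw, hPcol, hPd1, hPd2⟩ := hA
  have hn5 : 5 ≤ n := by rcases hn with h | h <;> omega
  have i0 : Fin n := ⟨0, by omega⟩
  have hppos : 0 < p ^ k := pow_pos hp.pos k
  have hdvd : ∀ i j, p ^ k ∣ A i j := fun i j =>
    (Nat.Prime.pow_dvd_iff_le_factorization hp (hpos i j).ne').mpr (hmin i j)
  set B : Fin n → Fin n → ℕ := fun i j => A i j / p ^ k with hB
  have hAB : ∀ i j, A i j = p ^ k * B i j := fun i j => (Nat.mul_div_cancel' (hdvd i j)).symm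
  have hSdvd : p ^ k ∣ S := by
    rw [← hrow i0]
    exact Finset.dvd_sum fun j _ => hdvd i0 j
  set s : ℕ := S / p ^ k with hs_def
  have hS : S = p ^ k * s := (Nat.mul_div_cancel' hSdvd).symm
  have hrowB : ∀ i, ∑ j, B i j = s := by
    intro i
    have h : p ^ k * ∑ j, B i j = p ^ k * s := by
      rw [Finset.mul_sum]
      simp_rw [← hAB]
      rw [hrow i, hS]
    exact Nat.eq_of_mul_eq_mul_left hppos h
  have hcolB : ∀ j, ∑ i, B i j = s := by
    intro j
    have h : p ^ k * ∑ i, B i j = p ^ k * s := by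
      rw [Finset.mul_sum]
      simp_rw [← hAB]
      rw [hcol j, hS]
    exact Nat.eq_of_mul_eq_mul_left hppos h
  have hmem : ∀ i j, ((A i j).factorization p = k ↔ ¬ p ∣ B i j) := by
    intro i j
    have h1 : p ^ (k + 1) ∣ A i j ↔ k + 1 ≤ (A i j).factorization p :=
      Nat.Prime.pow_dvd_iff_le_factorization hp (hpos i j).ne'
    have h2 : p ^ (k + 1) ∣ A i j ↔ p ∣ B i j := by
      rw [hAB i j, pow_succ, mul_dvd_mul_iff_left hppos.ne']
    have h3 := hmin i j
    constructor
    · intro h hd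
      have := h1.mp (h2.mpr hd)
      omega
    · intro hd
      by_contra h
      exact hd (h2.mp (h1.mpr (by omega)))
  set T : Finset (Fin n × Fin n) :=
    (Finset.univ : Finset (Fin n × Fin n)).filter
      fun c => (A c.1 c.2).factorization p = k with hT
  have hTmem : ∀ i j, (i, j) ∈ T ↔ ¬ p ∣ B i j := by
    intro i j
    simp only [hT, Finset.mem_filter, Finset.mem_univ, true_and]
    exact hmem i j
  by_cases hs : p ∣ s
  · -- every line through a minimal cell has a second minimal cell
    obtain ⟨i, j, hij⟩ := hatt
    have hBij : ¬ p ∣ B i j := (hmem i j).mp hij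
    have hrowex : ∀ i j, ¬ p ∣ B i j → ∃ j', j' ≠ j ∧ ¬ p ∣ B i j' := by
      intro i j hbij
      by_contra h
      push_neg at h
      have h1 : p ∣ ∑ x ∈ Finset.univ.erase j, B i x :=
        Finset.dvd_sum fun x hx => h x (Finset.ne_of_mem_erase hx)
      have h2 : ∑ x ∈ Finset.univ.erase j, B i x + B i j = s := by
        rw [Finset.sum_erase_add _ _ (Finset.mem_univ j)]
        exact hrowB i
      have h3 : s - ∑ x ∈ Finset.univ.erase j, B i x = B i j := by omega
      exact hbij (h3 ▸ Nat.dvd_sub hs h1)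
    have hcolex : ∀ i j, ¬ p ∣ B i j → ∃ i', i' ≠ i ∧ ¬ p ∣ B i' j := by
      intro i j hbij
      by_contra h
      push_neg at h
      have h1 : p ∣ ∑ x ∈ Finset.univ.erase i, B x j :=
        Finset.dvd_sum fun x hx => h x (Finset.ne_of_mem_erase hx)
      have h2 : ∑ x ∈ Finset.univ.erase i, B x j + B i j = s := by
        rw [Finset.sum_erase_add _ _ (Finset.mem_univ i)]
        exact hcolB j
      have h3 : s - ∑ x ∈ Finset.univ.erase i, B x j = B i j := by omega
      exact hbij (h3 ▸ Nat.dvd_sub hs h1)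
    obtain ⟨j', hj', hBij'⟩ := hrowex i j hBij
    obtain ⟨i', hi', hBi'j⟩ := hcolex i j hBij
    obtain ⟨i'', hi'', hBi''j'⟩ := hcolex i j' hBij'
    have hsub : ({(i, j), (i, j'), (i', j), (i'', j')} : Finset (Fin n × Fin n)) ⊆ T := by
      intro c hc
      simp only [Finset.mem_insert, Finset.mem_singleton] at hc
      rcases hc with rfl | rfl | rfl | rfl
      · exact (hTmem _ _).mpr hBij
      · exact (hTmem _ _).mpr hBij'
      · exact (hTmem _ _).mpr hBi'j
      · exact (hTmem _ _).mpr hBi''j'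
    have hne1 : (i, j) ∉ ({(i, j'), (i', j), (i'', j')} : Finset (Fin n × Fin n)) := by
      simp only [Finset.mem_insert, Finset.mem_singleton, Prod.mk.injEq, not_or]
      exact ⟨fun h => hj' h.2.symm, fun h => hi' h.1.symm, fun h => hj' h.2.symm⟩
    have hne2 : (i, j') ∉ ({(i', j), (i'', j')} : Finset (Fin n × Fin n)) := by
      simp only [Finset.mem_insert, Finset.mem_singleton, Prod.mk.injEq, not_or]
      exact ⟨fun h => hj' h.2, fun h => hi'' h.1.symm⟩
    have hne3 : (i', j) ∉ ({(i'', j')} : Finset (Fin n × Fin n)) := by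
      simp only [Finset.mem_singleton, Prod.mk.injEq, not_and]
      exact fun _ h => hj' h.symm
    have hcard : ({(i, j), (i, j'), (i', j), (i'', j')} : Finset (Fin n × Fin n)).card = 4 := by
      rw [Finset.card_insert_of_notMem hne1, Finset.card_insert_of_notMem hne2,
        Finset.card_insert_of_notMem hne3, Finset.card_singleton]
    calc 4 = _ := hcard.symm
      _ ≤ T.card := Finset.card_le_card hsub
  · -- every row has a minimal cell
    have hex : ∀ i, ∃ j, ¬ p ∣ B i j := by
      intro i
      by_contra h
      push_neg at h
      exact hs (hrowB i ▸ Finset.dvd_sum fun j _ => h j)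
    choose f hf using hex
    have hle : n ≤ T.card := by
      have h := Finset.card_le_card_of_injOn (s := (Finset.univ : Finset (Fin n)))
        (t := T) (fun i : Fin n => (i, f i))
        (fun i _ => (hTmem i (f i)).mpr (hf i))
        (fun a _ b _ h => by simpa using congrArg Prod.fst h)
      simpa using h
    omega
end

section
/- Let n ∈ {5, 6}. There is no n×n additive-multiplicative magic square of distinct positive integers whose magic product P has the form P = p^s·q^m, where p and q are distinct primes, s is a positive integer, and m is an integer with 0 ≤ m ≤ 3. (The case m = 0 says the magic product cannot be a prime power p^s.) -/
open Finset

section TwoPrimes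

variable {p q : ℕ}

lemma factorization_pow_mul_pow_left (hp : p.Prime) (hq : q.Prime) (hpq : p ≠ q) (x y : ℕ) :
    (p ^ x * q ^ y).factorization p = x := by
  rw [Nat.factorization_mul (pow_ne_zero _ hp.ne_zero) (pow_ne_zero _ hq.ne_zero)]
  simp [hp.factorization_pow, hq.factorization_pow, Ne.symm hpq]

lemma factorization_pow_mul_pow_right (hp : p.Prime) (hq : q.Prime) (hpq : p ≠ q) (x y : ℕ) :
    (p ^ x * q ^ y).factorization q = y := by
  rw [mul_comm]
  exact factorization_pow_mul_pow_left hq hp hpq.symm y x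

lemma eq_pow_mul_pow_of_dvd (hp : p.Prime) (hq : q.Prime) (hpq : p ≠ q) {d s m : ℕ}
    (hd : d ∣ p ^ s * q ^ m) : d = p ^ d.factorization p * q ^ d.factorization q := by
  obtain ⟨d₁, d₂, h₁, h₂, rfl⟩ := exists_dvd_and_dvd_of_dvd_mul hd
  obtain ⟨x, -, rfl⟩ := (Nat.dvd_prime_pow hp).mp h₁
  obtain ⟨y, -, rfl⟩ := (Nat.dvd_prime_pow hq).mp h₂
  rw [factorization_pow_mul_pow_left hp hq hpq, factorization_pow_mul_pow_right hp hq hpq]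

lemma eq_of_dvd_pow_mul_pow_of_factorization_eq (hp : p.Prime) (hq : q.Prime) (hpq : p ≠ q)
    {d e s m : ℕ} (hd : d ∣ p ^ s * q ^ m) (he : e ∣ p ^ s * q ^ m)
    (hfp : d.factorization p = e.factorization p) (hfq : d.factorization q = e.factorization q) :
    d = e := by
  rw [eq_pow_mul_pow_of_dvd hp hq hpq hd, eq_pow_mul_pow_of_dvd hp hq hpq he, hfp, hfq]

end TwoPrimes

lemma add_le_sum_of_ne {ι : Type*} [Fintype ι] (f : ι → ℕ) {i j : ι} (h : i ≠ j) :
    f i + f j ≤ ∑ k, f k := by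
  classical
  simpa [sum_pair h] using sum_le_sum_of_subset (f := f) (subset_univ {i, j})

lemma exists_ne_not_dvd_of_dvd_sum {ι : Type*} [Fintype ι] {d : ℕ} {f : ι → ℕ}
    (h : d ∣ ∑ i, f i) {j : ι} (hj : ¬ d ∣ f j) : ∃ j' ≠ j, ¬ d ∣ f j' := by
  classical
  by_contra! hdvd
  rw [← add_sum_erase _ _ (mem_univ j)] at h
  have hrest : d ∣ ∑ i ∈ univ.erase j, f i := dvd_sum fun i hi => hdvd i (ne_of_mem_erase hi)
  exact hj ((Nat.dvd_add_left hrest).mp h)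

lemma exists_row_notMem_of_injOn {n m : ℕ} {M : Set (Fin n × Fin n)} {b : Fin n × Fin n → ℕ}
    (hinj : Set.InjOn b M) (hb : ∀ c, b c ≤ m) (hn : m + 1 < n) :
    ∃ i, ∀ j, (i, j) ∉ M := by
  by_contra! hrow
  choose g hg using hrow
  obtain ⟨i, i', hne, heq⟩ := Fintype.exists_ne_map_eq_of_card_lt
    (fun i => (⟨b (i, g i), Nat.lt_succ_of_le (hb _)⟩ : Fin (m + 1))) (by simpa using hn)
  exact hne (congrArg Prod.fst (hinj (hg i) (hg i') (Fin.val_eq_of_eq heq)))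

/-- Models the cells of least `p`-adic valuation in the square (`M`), labelled by their
`q`-adic valuations (`b`). -/
structure PairedLabelling {n : ℕ} (M : Set (Fin n × Fin n)) (b : Fin n × Fin n → ℕ) : Prop where
  injOn : Set.InjOn b M
  row_mate : ∀ i j, (i, j) ∈ M → ∃ j' ≠ j, (i, j') ∈ M
  col_mate : ∀ i j, (i, j) ∈ M → ∃ i' ≠ i, (i', j) ∈ M
  row_sum_le : ∀ i, ∑ j, b (i, j) ≤ 3
  col_sum_le : ∀ j, ∑ i, b (i, j) ≤ 3

namespace PairedLabelling

variable {n : ℕ} {M : Set (Fin n × Fin n)} {b : Fin n × Fin n → ℕ}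

lemma transpose (h : PairedLabelling M b) : PairedLabelling (Prod.swap ⁻¹' M) (b ∘ Prod.swap) where
  injOn := h.injOn.comp Prod.swap_injective.injOn (Set.mapsTo_preimage _ _)
  row_mate i j hij := h.col_mate j i hij
  col_mate i j hij := h.row_mate j i hij
  row_sum_le := h.col_sum_le
  col_sum_le := h.row_sum_le

/-- The column through the label-`1` cell needs a second cell of `M`; its label is at most `2`
and differs from the three labels `0, 1, 2` already used. -/
lemma not_row_one_col_zero (h : PairedLabelling M b) {i₀ j₀ i₁ j₁ : Fin n}
    (h₀ : (i₀, j₀) ∈ M) (hb₀ : b (i₀, j₀) = 2)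
    (hj₁ : j₁ ≠ j₀) (hr : (i₀, j₁) ∈ M) (hbr : b (i₀, j₁) = 1)
    (hc : (i₁, j₀) ∈ M) (hbc : b (i₁, j₀) = 0) : False := by
  obtain ⟨i₂, hi₂, he⟩ := h.col_mate i₀ j₁ hr
  have hsum := (add_le_sum_of_ne (fun i => b (i, j₁)) hi₂).trans (h.col_sum_le j₁)
  have h0 : b (i₂, j₁) ≠ 2 := fun e =>
    hj₁ (congrArg Prod.snd (h.injOn he h₀ (e.trans hb₀.symm)))
  have h1 : b (i₂, j₁) ≠ 1 := fun e =>
    hi₂ (congrArg Prod.fst (h.injOn he hr (e.trans hbr.symm)))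
  have h2 : b (i₂, j₁) ≠ 0 := fun e =>
    hj₁ (congrArg Prod.snd (h.injOn he hc (e.trans hbc.symm)))
  omega

/-- A cell of `M` with largest label `β` has a row-mate and a column-mate with distinct labels
below `β` and at most `3 - β`; this forces `β = 2` and mates labelled `0` and `1`. -/
theorem eq_empty (h : PairedLabelling M b) : M = ∅ := by
  by_contra hne
  obtain ⟨⟨i₀, j₀⟩, h₀, hmax⟩ :=
    M.exists_max_image b M.toFinite (Set.nonempty_iff_ne_empty.2 hne)
  obtain ⟨j₁, hj₁, hr⟩ := h.row_mate i₀ j₀ h₀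
  obtain ⟨i₁, hi₁, hc⟩ := h.col_mate i₀ j₀ h₀
  have hr_le := hmax _ hr
  have hc_le := hmax _ hc
  have hr_ne : b (i₀, j₁) ≠ b (i₀, j₀) := fun e => hj₁ (congrArg Prod.snd (h.injOn hr h₀ e))
  have hc_ne : b (i₁, j₀) ≠ b (i₀, j₀) := fun e => hi₁ (congrArg Prod.fst (h.injOn hc h₀ e))
  have hrc_ne : b (i₀, j₁) ≠ b (i₁, j₀) := fun e => hi₁ (congrArg Prod.fst (h.injOn hr hc e)).symm
  have hr_sum := (add_le_sum_of_ne (fun j => b (i₀, j)) hj₁.symm).trans (h.row_sum_le i₀)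
  have hc_sum := (add_le_sum_of_ne (fun i => b (i, j₀)) hi₁.symm).trans (h.col_sum_le j₀)
  have hb₀ : b (i₀, j₀) = 2 := by omega
  obtain ⟨hbr, hbc⟩ | ⟨hbr, hbc⟩ :
      (b (i₀, j₁) = 1 ∧ b (i₁, j₀) = 0) ∨ (b (i₀, j₁) = 0 ∧ b (i₁, j₀) = 1) := by omega
  · exact h.not_row_one_col_zero h₀ hb₀ hj₁ hr hbr hc hbc
  · exact h.transpose.not_row_one_col_zero (i₀ := j₀) (j₀ := i₀) h₀ hb₀ hi₁ hc hbc hr hbr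

end PairedLabelling

section SemimagicSquare

variable {n p q s m S : ℕ} {A : Fin n → Fin n → ℕ}

lemma sum_factorization_eq_of_prod_eq {ι : Type*} [Fintype ι] (hp : p.Prime) (hq : q.Prime)
    (hpq : p ≠ q) {f : ι → ℕ} (hf : ∀ i, f i ≠ 0) (hprod : ∏ i, f i = p ^ s * q ^ m) :
    ∑ i, (f i).factorization q = m := by
  rw [← Nat.factorization_prod_apply fun i _ => hf i, hprod,
    factorization_pow_mul_pow_right hp hq hpq]

theorem false_of_semimagic_prod_eq_pow_mul_pow (hp : p.Prime) (hq : q.Prime) (hpq : p ≠ q)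
    (hm : m ≤ 3) (hn : m + 1 < n) (hpos : ∀ i j, 0 < A i j)
    (hinj : Function.Injective fun c : Fin n × Fin n => A c.1 c.2)
    (hrow : ∀ i, ∑ j, A i j = S) (hcol : ∀ j, ∑ i, A i j = S)
    (hrowP : ∀ i, ∏ j, A i j = p ^ s * q ^ m) (hcolP : ∀ j, ∏ i, A i j = p ^ s * q ^ m) :
    False := by
  have hA : ∀ i j, A i j ≠ 0 := fun i j => (hpos i j).ne'
  have hdvd : ∀ i j, A i j ∣ p ^ s * q ^ m := fun i j => hrowP i ▸ dvd_prod_of_mem _ (mem_univ j)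
  have : Nonempty (Fin n × Fin n) := ⟨(⟨0, by omega⟩, ⟨0, by omega⟩)⟩
  obtain ⟨⟨i₀, j₀⟩, hmin⟩ := Finite.exists_min fun c : Fin n × Fin n => (A c.1 c.2).factorization p
  set a₀ := (A i₀ j₀).factorization p
  let M : Set (Fin n × Fin n) := {c | ¬ p ^ (a₀ + 1) ∣ A c.1 c.2}
  have hmem : ∀ c, c ∈ M ↔ (A c.1 c.2).factorization p = a₀ := fun c => by
    have : a₀ ≤ (A c.1 c.2).factorization p := hmin c
    rw [Set.mem_ofPred_eq, hp.pow_dvd_iff_le_factorization (hA c.1 c.2)]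
    omega
  let b : Fin n × Fin n → ℕ := fun c => (A c.1 c.2).factorization q
  have hinjOn : Set.InjOn b M := fun c hc c' hc' he => hinj <|
    eq_of_dvd_pow_mul_pow_of_factorization_eq hp hq hpq (hdvd c.1 c.2) (hdvd c'.1 c'.2)
      (((hmem c).1 hc).trans ((hmem c').1 hc').symm) he
  have hrow_b : ∀ i, ∑ j, b (i, j) = m := fun i =>
    sum_factorization_eq_of_prod_eq hp hq hpq (hA i) (hrowP i)
  have hcol_b : ∀ j, ∑ i, b (i, j) = m := fun j =>
    sum_factorization_eq_of_prod_eq hp hq hpq (hA · j) (hcolP j)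
  obtain ⟨i, hi⟩ := exists_row_notMem_of_injOn hinjOn
    (fun c => hrow_b c.1 ▸ single_le_sum (fun j _ => Nat.zero_le (b (c.1, j))) (mem_univ c.2))
    hn
  have hS : p ^ (a₀ + 1) ∣ S := hrow i ▸ dvd_sum fun j _ => not_not.1 (hi j)
  have hM : PairedLabelling M b :=
    { injOn := hinjOn
      row_mate := fun i _ hij => exists_ne_not_dvd_of_dvd_sum (hrow i ▸ hS) hij
      col_mate := fun _ j hij => exists_ne_not_dvd_of_dvd_sum (f := (A · j)) (hcol j ▸ hS) hij
      row_sum_le := fun i => (hrow_b i).trans_le hm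
      col_sum_le := fun j => (hcol_b j).trans_le hm }
  exact hM.eq_empty.subset ((hmem (i₀, j₀)).2 rfl)

end SemimagicSquare

/-- No 5×5 or 6×6 additive-multiplicative magic square of distinct positive
integers has a magic product of the form `p^s * q^m` with `p ≠ q` primes,
`s ≥ 1` and `0 ≤ m ≤ 3`. -/
theorem no_magic_square_with_product_p_pow_q_cube
    (n : ℕ) (hn : n = 5 ∨ n = 6) :
    ¬ ∃ (A : Fin n → Fin n → ℕ) (S P : ℕ) (p q s m : ℕ),
      IsAddMulMagicSquare n A S P ∧ p.Prime ∧ q.Prime ∧ p ≠ q ∧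
      1 ≤ s ∧ m ≤ 3 ∧ P = p ^ s * q ^ m := by
  rintro ⟨A, S, P, p, q, s, m,
    ⟨hpos, hinj, hrow, hcol, -, -, hrowP, hcolP, -, -⟩, hp, hq, hpq, -, hm, rfl⟩
  exact false_of_semimagic_prod_eq_pow_mul_pow hp hq hpq hm (by omega) hpos hinj hrow hcol
    hrowP hcolP
end

section
/- Let n ∈ {5, 6}. There is no n×n additive-multiplicative magic square of distinct positive integers whose magic product P has the form P = p^s·q·r, where p, q, r are pairwise distinct primes and s is a positive integer. -/
open Finset

theorem Finset.mul_dvd_prod_of_ne {ι M : Type*} [CommMonoid M] {s : Finset ι} (f : ι → M)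
    {i j : ι} (hi : i ∈ s) (hj : j ∈ s) (hij : i ≠ j) : f i * f j ∣ ∏ k ∈ s, f k := by
  classical
  rw [← prod_pair hij]
  exact prod_dvd_prod_of_subset _ _ _ (insert_subset hi (singleton_subset_iff.mpr hj))

theorem Finset.exists_forall_notMem_of_card_lt {ι κ : Type*} [Fintype ι] [DecidableEq ι]
    {M : Finset (ι × κ)} (hM : #M < Fintype.card ι) : ∃ i, ∀ j, (i, j) ∉ M := by
  by_contra! h
  choose f hf using h
  have hsurj : univ ⊆ M.image Prod.fst := fun i _ => mem_image.mpr ⟨(i, f i), hf i, rfl⟩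
  exact (card_le_card hsurj |>.trans card_image_le).not_gt hM

theorem Finset.four_le_card_of_exists_partner {ι κ : Type*} [DecidableEq ι] [DecidableEq κ]
    {M : Finset (ι × κ)} (hM : M.Nonempty) (hrow : ∀ c ∈ M, ∃ j ≠ c.2, (c.1, j) ∈ M)
    (hcol : ∀ c ∈ M, ∃ i ≠ c.1, (i, c.2) ∈ M) : 4 ≤ #M := by
  obtain ⟨⟨i, j⟩, hc⟩ := hM
  obtain ⟨j', hj', hc₁⟩ := hrow _ hc
  obtain ⟨i', hi', hc₂⟩ := hcol _ hc
  obtain ⟨i'', hi'', hc₃⟩ := hcol _ hc₁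
  calc 4 = #{(i, j), (i, j'), (i', j), (i'', j')} := by
        simp [card_insert_of_notMem, hj', hj'.symm, hi'.symm, hi''.symm]
    _ ≤ #M := card_le_card (by simp [insert_subset_iff, *])

namespace Nat

theorem dvd_of_dvd_sum_of_forall_ne {ι : Type*} [Fintype ι] [DecidableEq ι] {d : ℕ}
    {f : ι → ℕ} (i : ι) (hsum : d ∣ ∑ k, f k) (h : ∀ k ≠ i, d ∣ f k) : d ∣ f i := by
  rw [← add_sum_erase _ _ (mem_univ i)] at hsum
  exact (Nat.dvd_add_left (dvd_sum fun k hk => h k (ne_of_mem_erase hk))).mp hsum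

theorem exists_ne_factorization_eq_of_pow_succ_dvd_sum {ι : Type*} [Fintype ι] {p μ : ℕ}
    (hp : p.Prime) {f : ι → ℕ} (hf : ∀ k, f k ≠ 0) (hmin : ∀ k, μ ≤ (f k).factorization p)
    (hsum : p ^ (μ + 1) ∣ ∑ k, f k) {i : ι} (hi : (f i).factorization p = μ) :
    ∃ k ≠ i, (f k).factorization p = μ := by
  classical
  by_contra! h
  have hdvd := dvd_of_dvd_sum_of_forall_ne i hsum fun k hk =>
    (hp.pow_dvd_iff_le_factorization (hf k)).mpr ((hmin k).lt_of_ne' (h k hk))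
  have := (hp.pow_dvd_iff_le_factorization (hf i)).mp hdvd
  omega

theorem ordCompl_dvd_of_dvd_pow_mul {p x s m : ℕ} (hp : p.Prime) (hx : x ≠ 0)
    (h : x ∣ p ^ s * m) : ordCompl[p] x ∣ m :=
  ((coprime_ordCompl hp hx).symm.pow_right s).dvd_of_dvd_mul_left ((ordCompl_dvd x p).trans h)

theorem ordCompl_eq_one_of_mul_dvd {p x y s m : ℕ} (hp : p.Prime) (hx : x ≠ 0) (hy : y ≠ 0)
    (hm : m ≠ 0) (h : x * y ∣ p ^ s * m) (hxm : ordCompl[p] x = m) : ordCompl[p] y = 1 := by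
  have := ordCompl_dvd_of_dvd_pow_mul hp (mul_ne_zero hx hy) h
  rw [ordCompl_mul, hxm, ← mul_one m, mul_assoc, one_mul] at this
  exact dvd_one.mp ((Nat.mul_dvd_mul_iff_left (pos_of_ne_zero hm)).mp this)

theorem card_divisors_prime_mul_prime {q r : ℕ} (hq : q.Prime) (hr : r.Prime) (hqr : q ≠ r) :
    #(q * r).divisors = 4 := by
  rw [Coprime.card_divisors_mul ((coprime_primes hq hr).mpr hqr), hq.divisors, hr.divisors,
    card_pair hq.one_lt.ne, card_pair hr.one_lt.ne]

end Nat

def valuationCells {n : ℕ} (A : Fin n → Fin n → ℕ) (p μ : ℕ) : Finset (Fin n × Fin n) :=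
  {c | (A c.1 c.2).factorization p = μ}

@[simp]
theorem mem_valuationCells {n : ℕ} {A : Fin n → Fin n → ℕ} {p μ : ℕ} {c : Fin n × Fin n} :
    c ∈ valuationCells A p μ ↔ (A c.1 c.2).factorization p = μ := by
  simp [valuationCells]

namespace IsAddMulMagicSquare

variable {n : ℕ} {A : Fin n → Fin n → ℕ} {S P : ℕ}

theorem ne_zero (hA : IsAddMulMagicSquare n A S P) (i j : Fin n) : A i j ≠ 0 :=
  (hA.1 i j).ne'

theorem dvd (hA : IsAddMulMagicSquare n A S P) (i j : Fin n) : A i j ∣ P :=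
  hA.2.2.2.2.2.2.1 i ▸ dvd_prod_of_mem _ (mem_univ j)

theorem mul_dvd_of_row (hA : IsAddMulMagicSquare n A S P) (i : Fin n) {j j' : Fin n}
    (h : j ≠ j') : A i j * A i j' ∣ P :=
  hA.2.2.2.2.2.2.1 i ▸ mul_dvd_prod_of_ne _ (mem_univ j) (mem_univ j') h

theorem mul_dvd_of_col (hA : IsAddMulMagicSquare n A S P) (j : Fin n) {i i' : Fin n}
    (h : i ≠ i') : A i j * A i' j ∣ P :=
  hA.2.2.2.2.2.2.2.1 j ▸ mul_dvd_prod_of_ne (fun i => A i j) (mem_univ i) (mem_univ i') h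

theorem ordCompl_injOn (hA : IsAddMulMagicSquare n A S P) (p μ : ℕ) :
    Set.InjOn (fun c : Fin n × Fin n => ordCompl[p] (A c.1 c.2)) (valuationCells A p μ) := by
  intro c hc d hd h
  apply hA.2.1
  dsimp only at h ⊢
  rw [← Nat.ordProj_mul_ordCompl_eq_self (A c.1 c.2) p,
    ← Nat.ordProj_mul_ordCompl_eq_self (A d.1 d.2) p, h, mem_valuationCells.mp hc,
    mem_valuationCells.mp hd]

theorem exists_partners_of_card_lt {p μ : ℕ} (hA : IsAddMulMagicSquare n A S P) (hp : p.Prime)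
    (hmin : ∀ i j, μ ≤ (A i j).factorization p) (hcard : #(valuationCells A p μ) < n)
    {c : Fin n × Fin n} (hc : c ∈ valuationCells A p μ) :
    (∃ j ≠ c.2, (c.1, j) ∈ valuationCells A p μ) ∧ ∃ i ≠ c.1, (i, c.2) ∈ valuationCells A p μ := by
  obtain ⟨i₀, hi₀⟩ := exists_forall_notMem_of_card_lt (hcard.trans_eq (Fintype.card_fin n).symm)
  have hS : p ^ (μ + 1) ∣ S := hA.2.2.1 i₀ ▸ dvd_sum fun j _ =>
    (hp.pow_dvd_iff_le_factorization (hA.ne_zero i₀ j)).mpr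
      ((hmin i₀ j).lt_of_ne' fun h => hi₀ j (mem_valuationCells.mpr h))
  simp only [mem_valuationCells] at hc ⊢
  exact ⟨Nat.exists_ne_factorization_eq_of_pow_succ_dvd_sum hp (hA.ne_zero c.1) (hmin c.1)
      (hA.2.2.1 c.1 ▸ hS) hc,
    Nat.exists_ne_factorization_eq_of_pow_succ_dvd_sum hp (hA.ne_zero · c.2) (hmin · c.2)
      (hA.2.2.2.1 c.2 ▸ hS) hc⟩

theorem ordCompl_ne_of_partners {p s m μ : ℕ} (hA : IsAddMulMagicSquare n A S P) (hp : p.Prime)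
    (hP : P = p ^ s * m) (hm : m ≠ 0) {i j i' j' : Fin n} (hj : j' ≠ j) (hi : i' ≠ i)
    (hrow : (i, j') ∈ valuationCells A p μ) (hcol : (i', j) ∈ valuationCells A p μ) :
    ordCompl[p] (A i j) ≠ m := by
  intro hij
  have hrow₁ : ordCompl[p] (A i j') = 1 := Nat.ordCompl_eq_one_of_mul_dvd hp (hA.ne_zero _ _)
    (hA.ne_zero _ _) hm (hP ▸ hA.mul_dvd_of_row i hj.symm) hij
  have hcol₁ : ordCompl[p] (A i' j) = 1 := Nat.ordCompl_eq_one_of_mul_dvd hp (hA.ne_zero _ _)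
    (hA.ne_zero _ _) hm (hP ▸ hA.mul_dvd_of_col j hi.symm) hij
  exact hi (congrArg Prod.fst (hA.ordCompl_injOn p μ hcol hrow (hcol₁.trans hrow₁.symm)))

end IsAddMulMagicSquare

/-- No 5×5 or 6×6 additive-multiplicative magic square of distinct positive
integers has a magic product of the form `p^s * q * r` with `p, q, r` pairwise
distinct primes and `s ≥ 1`. -/
theorem no_magic_square_with_product_p_pow_q_r
    (n : ℕ) (hn : n = 5 ∨ n = 6) :
    ¬ ∃ (A : Fin n → Fin n → ℕ) (S P : ℕ) (p q r s : ℕ),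
      IsAddMulMagicSquare n A S P ∧ p.Prime ∧ q.Prime ∧ r.Prime ∧
      p ≠ q ∧ p ≠ r ∧ q ≠ r ∧ 1 ≤ s ∧ P = p ^ s * q * r := by
  rintro ⟨A, S, P, p, q, r, s, hA, hp, hq, hr, -, -, hqr, -, hP⟩
  rw [mul_assoc] at hP
  have hqr0 : q * r ≠ 0 := mul_ne_zero hq.ne_zero hr.ne_zero
  have : Nonempty (Fin n) := ⟨⟨0, by omega⟩⟩
  obtain ⟨c₀, -, hc₀⟩ := univ.exists_min_image (fun c : Fin n × Fin n =>
    (A c.1 c.2).factorization p) univ_nonempty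
  set M := valuationCells A p ((A c₀.1 c₀.2).factorization p)
  set u := fun c : Fin n × Fin n => ordCompl[p] (A c.1 c.2)
  have hinj : Set.InjOn u M := hA.ordCompl_injOn p _
  have hu : ∀ c, u c ∈ (q * r).divisors := fun c => Nat.mem_divisors.mpr
    ⟨Nat.ordCompl_dvd_of_dvd_pow_mul hp (hA.ne_zero _ _) (hP ▸ hA.dvd _ _), hqr0⟩
  have hcard_le_four : #M ≤ 4 := Nat.card_divisors_prime_mul_prime hq hr hqr ▸
    card_le_card_of_injOn u (fun c _ => hu c) hinj
  have hpart := fun c (hc : c ∈ M) => hA.exists_partners_of_card_lt hp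
    (fun i j => hc₀ (i, j) (mem_univ _)) (hcard_le_four.trans_lt (by omega)) hc
  have hcard_le_three : #M ≤ 3 := by
    have hm : ∀ c ∈ M, u c ≠ q * r := fun c hc => by
      obtain ⟨⟨j, hj, hcj⟩, ⟨i, hi, hci⟩⟩ := hpart c hc
      exact hA.ordCompl_ne_of_partners hp hP hqr0 hj hi hcj hci
    have := card_le_card_of_injOn u (t := (q * r).divisors.erase (q * r))
      (fun c hc => mem_erase.mpr ⟨hm c hc, hu c⟩) hinj
    rwa [card_erase_of_mem (Nat.mem_divisors_self _ hqr0),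
      Nat.card_divisors_prime_mul_prime hq hr hqr] at this
  have hfour_le_card : 4 ≤ #M := four_le_card_of_exists_partner ⟨c₀, mem_valuationCells.mpr rfl⟩
    (fun c hc => (hpart c hc).1) (fun c hc => (hpart c hc).2)
  omega
end

section
/- Let m and n be positive integers, let p be a prime, and let Z_1, …, Z_{m+n} be pairwise disjoint nonempty finite sets of positive integers, all having the same sum. Suppose that the non-p components x / p^{v_p(x)}, as x ranges over the union Z_1 ∪ ⋯ ∪ Z_{m+n}, assume at most m distinct values. Then p ≤ ⌈m/n⌉. -/
private lemma geom_nat (p : ℕ) (hp : 1 ≤ p) (n : ℕ) :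
    (p - 1) * ∑ j ∈ Finset.range n, p ^ j = p ^ n - 1 := by
  induction n with
  | zero => simp
  | succ n ih =>
    rw [Finset.sum_range_succ, Nat.mul_add, ih, pow_succ]
    have h1 : 1 ≤ p ^ n := Nat.one_le_pow _ _ hp
    have h2 : (p - 1) * p ^ n = p ^ n * p - p ^ n := by
      rw [Nat.sub_mul, one_mul, mul_comm]
    have h3 : p ^ n ≤ p ^ n * p := Nat.le_mul_of_pos_right _ hp
    omega

/-- If `m + n` pairwise disjoint nonempty finite sets of positive integers all
have the same sum, and the non-`p` components of the elements of their union
take at most `m` distinct values, then `p ≤ ⌈m / n⌉`. -/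
theorem prime_le_ceil_of_few_non_p_components
    (m n : ℕ) (hm : 1 ≤ m) (hn : 1 ≤ n)
    (p : ℕ) (hp : p.Prime)
    (Z : Fin (m + n) → Finset ℕ)
    (hdisj : ∀ i j, i ≠ j → Disjoint (Z i) (Z j))
    (hne : ∀ i, (Z i).Nonempty)
    (hpos : ∀ i, ∀ x ∈ Z i, 0 < x)
    (S : ℕ) (hsum : ∀ i, ∑ x ∈ Z i, x = S)
    (hcomp : ((Finset.univ.biUnion Z).image
        fun x => x / p ^ x.factorization p).card ≤ m) :
    p ≤ m ⌈/⌉ n := by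
  set f : ℕ → ℕ := fun x => x / p ^ x.factorization p with hf
  set U : Finset ℕ := Finset.univ.biUnion Z with hU
  set C : Finset ℕ := U.image f with hC
  have hp2 : 2 ≤ p := hp.two_le
  -- every element of U is positive and ≤ S
  have i0 : Fin (m + n) := ⟨0, by omega⟩
  have hposU : ∀ x ∈ U, 0 < x := by
    intro x hx
    rw [hU, Finset.mem_biUnion] at hx
    obtain ⟨i, _, hxi⟩ := hx
    exact hpos i x hxi
  have hleS : ∀ x ∈ U, x ≤ S := by
    intro x hx
    rw [hU, Finset.mem_biUnion] at hx
    obtain ⟨i, _, hxi⟩ := hx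
    calc x ≤ ∑ y ∈ Z i, y :=
      Finset.single_le_sum (fun y _ => Nat.zero_le y) hxi
    _ = S := hsum i
  have hSpos : 0 < S := by
    obtain ⟨x, hx⟩ := hne i0
    have := hpos i0 x hx
    have hxle : x ≤ S := hleS x (Finset.mem_biUnion.2 ⟨i0, Finset.mem_univ _, hx⟩)
    omega
  -- total sum over U
  have htot : ∑ x ∈ U, x = (m + n) * S := by
    rw [hU, Finset.sum_biUnion]
    · simp [hsum, Finset.card_univ]
    · intro i _ j _ hij
      exact hdisj i j hij
  -- fiber decomposition
  have hfib : ∑ c ∈ C, ∑ x ∈ U.filter (fun x => f x = c), x = ∑ x ∈ U, x :=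
    Finset.sum_fiberwise_of_maps_to (fun x hx => Finset.mem_image_of_mem f hx) _
  -- per-fiber bound
  have hfiber : ∀ c ∈ C, (p - 1) * ∑ x ∈ U.filter (fun x => f x = c), x < p * S := by
    intro c hc
    set F : Finset ℕ := U.filter (fun x => f x = c) with hF
    have hFne : F.Nonempty := by
      rw [hC, Finset.mem_image] at hc
      obtain ⟨x, hx, hfx⟩ := hc
      exact ⟨x, Finset.mem_filter.2 ⟨hx, hfx⟩⟩
    obtain ⟨x₀, hx₀F, hmax⟩ := F.exists_max_image (fun x => x.factorization p) hFne
    have hx₀U : x₀ ∈ U := (Finset.mem_filter.1 hx₀F).1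
    have hx₀c : f x₀ = c := (Finset.mem_filter.1 hx₀F).2
    have hx₀pos : 0 < x₀ := hposU x₀ hx₀U
    set E : ℕ := x₀.factorization p with hE
    have hcpos : 0 < c := by
      rw [← hx₀c]
      exact Nat.ordCompl_pos p hx₀pos.ne'
    -- each x in F equals p^(v x) * c
    have hxeq : ∀ x ∈ F, x = p ^ x.factorization p * c := by
      intro x hx
      have h1 := (Finset.mem_filter.1 hx).2
      rw [← h1]
      exact (Nat.ordProj_mul_ordCompl_eq_self x p).symm
    -- exponent map is injective on F
    have hinj : Set.InjOn (fun x => x.factorization p) (F : Set ℕ) := by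
      intro x hx y hy hxy
      simp only at hxy
      rw [hxeq x (Finset.mem_coe.1 hx), hxeq y (Finset.mem_coe.1 hy), hxy]
    have hsum1 : ∑ x ∈ F, x = (∑ x ∈ F, p ^ x.factorization p) * c := by
      rw [Finset.sum_mul]
      exact Finset.sum_congr rfl hxeq
    have hsub : F.image (fun x => x.factorization p) ⊆ Finset.range (E + 1) := by
      intro j hj
      rw [Finset.mem_image] at hj
      obtain ⟨x, hx, hxj⟩ := hj
      rw [Finset.mem_range, Nat.lt_succ_iff, ← hxj]
      exact hmax x hx
    have hsum2 : ∑ x ∈ F, p ^ x.factorization p ≤ ∑ j ∈ Finset.range (E + 1), p ^ j := by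
      rw [← Finset.sum_image (fun x hx y hy h => hinj hx hy h)]
      exact Finset.sum_le_sum_of_subset hsub
    have hkey : (p - 1) * ∑ x ∈ F, x ≤ (p ^ (E + 1) - 1) * c := by
      rw [hsum1, ← Nat.mul_assoc]
      apply Nat.mul_le_mul_right
      calc (p - 1) * ∑ x ∈ F, p ^ x.factorization p
          ≤ (p - 1) * ∑ j ∈ Finset.range (E + 1), p ^ j :=
            Nat.mul_le_mul_left _ hsum2
        _ = p ^ (E + 1) - 1 := geom_nat p (by omega) _
    have hx₀eq : x₀ = p ^ E * c := by
      rw [← hx₀c, hE]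
      exact (Nat.ordProj_mul_ordCompl_eq_self x₀ p).symm
    have hlt : (p ^ (E + 1) - 1) * c < p * x₀ := by
      rw [hx₀eq, ← Nat.mul_assoc, ← pow_succ']
      have h1 : 1 ≤ p ^ (E + 1) := Nat.one_le_pow _ _ (by omega)
      exact Nat.mul_lt_mul_of_lt_of_le (by omega) le_rfl hcpos
    have hx₀S : x₀ ≤ S := hleS x₀ hx₀U
    calc (p - 1) * ∑ x ∈ F, x ≤ (p ^ (E + 1) - 1) * c := hkey
      _ < p * x₀ := hlt
      _ ≤ p * S := Nat.mul_le_mul_left p hx₀S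
  -- C is nonempty
  have hCne : C.Nonempty := by
    obtain ⟨x, hx⟩ := hne i0
    exact ⟨f x, Finset.mem_image_of_mem f (Finset.mem_biUnion.2 ⟨i0, Finset.mem_univ _, hx⟩)⟩
  -- combine
  have hmain : (p - 1) * ((m + n) * S) < m * (p * S) := by
    calc (p - 1) * ((m + n) * S) = (p - 1) * ∑ x ∈ U, x := by rw [htot]
      _ = ∑ c ∈ C, (p - 1) * ∑ x ∈ U.filter (fun x => f x = c), x := by
          rw [← hfib, Finset.mul_sum]
      _ < ∑ c ∈ C, p * S := Finset.sum_lt_sum_of_nonempty hCne hfiber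
      _ = C.card * (p * S) := by rw [Finset.sum_const, smul_eq_mul]
      _ ≤ m * (p * S) := Nat.mul_le_mul_right _ hcomp
  -- extract (p-1)*n < m
  have hstep : (p - 1) * n < m := by
    have h1 : (p - 1) * (m + n) < m * p := by
      have hS' : 0 < S := hSpos
      have := hmain
      rw [show (p - 1) * ((m + n) * S) = ((p - 1) * (m + n)) * S by ring,
        show m * (p * S) = (m * p) * S by ring] at this
      exact Nat.lt_of_mul_lt_mul_right this
    have h2 : (p - 1) * (m + n) = (p - 1) * m + (p - 1) * n := by ring
    have h3 : m * p = m * (p - 1) + m := by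
      have : p - 1 + 1 = p := by omega
      calc m * p = m * (p - 1 + 1) := by rw [this]
      _ = m * (p - 1) + m := by ring
    have h4 : (p - 1) * m = m * (p - 1) := Nat.mul_comm _ _
    omega
  -- conclude
  rw [Nat.ceilDiv_eq_add_pred_div, Nat.le_div_iff_mul_le hn]
  have hpn : p * n ≤ (p - 1) * n + n := by
    have h : p ≤ p - 1 + 1 := by omega
    calc p * n ≤ (p - 1 + 1) * n := Nat.mul_le_mul_right n h
      _ = (p - 1) * n + n := by ring
  omega
end

section
/- Let n ∈ {5, 6}, and let A be an n×n additive-multiplicative magic square of distinct positive integers with magic product P. Suppose some entry D lying on a long diagonal of A satisfies P/D = p^s·q for distinct primes p and q and a positive integer s. Then p = 2. -/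
open Finset

private lemma final_arith (p pm G N2 N3 : ℤ) (hp : 3 ≤ p) (hpm : 1 ≤ pm)
    (hG0 : 0 ≤ G) (hGg : G * (p - 1) = pm - 1)
    (hlow : pm - G ≤ N2) (hup : N3 ≤ G + pm) (hstep : p * N2 < N3) : False := by
  have hI : p * pm - p * G < G + pm := by
    have := mul_le_mul_of_nonneg_left hlow (show (0:ℤ) ≤ p by linarith)
    linarith
  have hImul : (p - 1) * (p * pm - p * G) < (p - 1) * (G + pm) :=
    mul_lt_mul_of_pos_left hI (by linarith)
  have hGg2 : (G * (p - 1)) * p = (pm - 1) * p := by rw [hGg]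
  have h3 : 0 ≤ (pm * p) * (p - 3) :=
    mul_nonneg (mul_nonneg (by linarith) (by linarith)) (by linarith)
  nlinarith [hImul, hGg, hGg2, h3]

lemma core_lemma (p q b1 b2 b3 T : ℕ) (S1 S2 S3 : Finset ℕ)
    (hp : 3 ≤ p) (hq : 1 ≤ q) (hb12 : b1 < b2) (hb23 : b2 < b3)
    (hd2 : Disjoint S1 S2) (hd3 : Disjoint S1 S3)
    (h1 : ∑ a ∈ S1, p ^ a + q * p ^ b1 = T)
    (h2 : ∑ a ∈ S2, p ^ a + q * p ^ b2 = T)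
    (h3 : ∑ a ∈ S3, p ^ a + q * p ^ b3 = T) : False := by
  have hp1 : (1:ℤ) < (p:ℤ) := by exact_mod_cast lt_of_lt_of_le (by norm_num) hp
  have hp3 : (3:ℤ) ≤ (p:ℤ) := by exact_mod_cast hp
  have hp0 : (0:ℤ) < (p:ℤ) := by linarith
  obtain ⟨d2, hb2eq, hd2ge⟩ : ∃ d, b2 = b1 + d ∧ 1 ≤ d := ⟨b2 - b1, by omega, by omega⟩
  obtain ⟨d3, hb3eq, hd3ge⟩ : ∃ d, b3 = b1 + d ∧ d2 + 1 ≤ d := ⟨b3 - b1, by omega, by omega⟩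
  have z1 := congrArg (Nat.cast : ℕ → ℤ) h1
  have z2 := congrArg (Nat.cast : ℕ → ℤ) h2
  have z3 := congrArg (Nat.cast : ℕ → ℤ) h3
  push_cast at z1 z2 z3
  rw [hb2eq, pow_add] at z2
  rw [hb3eq, pow_add] at z3
  set A1 : ℤ := ∑ a ∈ S1, (p:ℤ) ^ a with hA1def
  set A2 : ℤ := ∑ a ∈ S2, (p:ℤ) ^ a with hA2def
  set A3 : ℤ := ∑ a ∈ S3, (p:ℤ) ^ a with hA3def
  set Q : ℤ := (q:ℤ) * (p:ℤ) ^ b1 with hQdef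
  have hQ1 : 1 ≤ Q := by
    have hq' : (1:ℤ) ≤ (q:ℤ) := by exact_mod_cast hq
    have hpb : (1:ℤ) ≤ (p:ℤ) ^ b1 := one_le_pow₀ hp1.le
    calc (1:ℤ) = 1 * 1 := by ring
    _ ≤ (q:ℤ) * (p:ℤ) ^ b1 := mul_le_mul hq' hpb (by norm_num) (by linarith)
  have e12 : A1 = A2 + Q * ((p:ℤ) ^ d2 - 1) := by linear_combination z1 - z2
  have e13 : A1 = A3 + Q * ((p:ℤ) ^ d3 - 1) := by linear_combination z1 - z3
  have hpd2 : (1:ℤ) < (p:ℤ) ^ d2 := one_lt_pow₀ hp1 (by omega)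
  have hpd3 : (1:ℤ) < (p:ℤ) ^ d3 := one_lt_pow₀ hp1 (by omega)
  have hA2nonneg : 0 ≤ A2 := Finset.sum_nonneg fun a _ => by positivity
  have hA3nonneg : 0 ≤ A3 := Finset.sum_nonneg fun a _ => by positivity
  have hN2pos : 0 < Q * ((p:ℤ) ^ d2 - 1) := mul_pos (by linarith) (by linarith)
  have hN3pos : 0 < Q * ((p:ℤ) ^ d3 - 1) := mul_pos (by linarith) (by linarith)
  have hS1ne : S1.Nonempty := by
    rcases S1.eq_empty_or_nonempty with h | h
    · exfalso
      have hz : A1 = 0 := by rw [hA1def, h, Finset.sum_empty]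
      linarith only [hz, e12, hN2pos, hA2nonneg]
    · exact h
  set m := S1.max' hS1ne with hm
  have hmem : m ∈ S1 := S1.max'_mem hS1ne
  set G : ℤ := ∑ a ∈ Finset.range m, (p:ℤ) ^ a with hGdef
  have hGgeom : G * ((p:ℤ) - 1) = (p:ℤ) ^ m - 1 := geom_sum_mul _ _
  have hGnonneg : 0 ≤ G := Finset.sum_nonneg fun a _ => by positivity
  have hA1low : (p:ℤ) ^ m ≤ A1 :=
    Finset.single_le_sum (f := fun a => (p:ℤ) ^ a) (fun a _ => by positivity) hmem
  have hA1up : A1 ≤ G + (p:ℤ) ^ m := by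
    have hsub : S1 ⊆ Finset.range (m + 1) := fun a ha =>
      Finset.mem_range.mpr (Nat.lt_succ_of_le (S1.le_max' a ha))
    calc A1 ≤ ∑ a ∈ Finset.range (m+1), (p:ℤ) ^ a :=
          Finset.sum_le_sum_of_subset_of_nonneg hsub (fun a _ _ => by positivity)
    _ = G + (p:ℤ) ^ m := by rw [Finset.sum_range_succ]
  have hpmpos : (0:ℤ) < (p:ℤ) ^ m := pow_pos hp0 m
  have hGle : G ≤ (p:ℤ) ^ m - 1 := by
    have h2 : G ≤ G * ((p:ℤ) - 1) := le_mul_of_one_le_right hGnonneg (by linarith)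
    linarith only [h2, hGgeom]
  have key : ∀ (S : Finset ℕ), Disjoint S1 S → ∀ AS : ℤ, AS = ∑ a ∈ S, (p:ℤ) ^ a → AS ≤ A1 → AS ≤ G := by
    intro S hdisj AS hAS hle
    have hsub : S ⊆ Finset.range m := by
      intro a ha
      have hpa : (p:ℤ) ^ a ≤ AS := by
        rw [hAS]
        exact Finset.single_le_sum (f := fun a => (p:ℤ) ^ a) (fun a _ => by positivity) ha
      have hlt : (p:ℤ) ^ a < (p:ℤ) ^ (m + 1) := by
        have hps : (p:ℤ) ^ (m+1) = (p:ℤ) ^ m * (p:ℤ) := pow_succ _ _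
        have h3pm : (p:ℤ) ^ m * 3 ≤ (p:ℤ) ^ m * (p:ℤ) :=
          mul_le_mul_of_nonneg_left hp3 hpmpos.le
        linarith only [hpa, hle, hA1up, hGle, hps, h3pm, hpmpos]
      have ham : a ≤ m := by
        have := (pow_lt_pow_iff_right₀ hp1).mp hlt
        omega
      have hne : a ≠ m := fun h => (Finset.disjoint_right.mp hdisj ha) (h ▸ hmem)
      exact Finset.mem_range.mpr (lt_of_le_of_ne ham hne)
    rw [hAS]
    exact Finset.sum_le_sum_of_subset_of_nonneg hsub (fun a _ _ => by positivity)
  have hA2le : A2 ≤ A1 := by linarith only [e12, hN2pos]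
  have hA3le : A3 ≤ A1 := by linarith only [e13, hN3pos]
  have hA2G : A2 ≤ G := key S2 hd2 A2 hA2def hA2le
  have hA3G : A3 ≤ G := key S3 hd3 A3 hA3def hA3le
  have hstep : (p:ℤ) * (Q * ((p:ℤ) ^ d2 - 1)) < Q * ((p:ℤ) ^ d3 - 1) := by
    have hpow : (p:ℤ) ^ d2 * (p:ℤ) ≤ (p:ℤ) ^ d3 := by
      rw [← pow_succ]
      exact pow_le_pow_right₀ hp1.le hd3ge
    have hm1 : Q * ((p:ℤ) ^ d2 * p) ≤ Q * (p:ℤ) ^ d3 :=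
      mul_le_mul_of_nonneg_left hpow (by linarith)
    have hm2 : (p:ℤ) - 1 ≤ Q * ((p:ℤ) - 1) := le_mul_of_one_le_left (by linarith) hQ1
    have hexp : Q * ((p:ℤ) ^ d3 - 1) - (p:ℤ) * (Q * ((p:ℤ) ^ d2 - 1)) =
        (Q * (p:ℤ) ^ d3 - Q * ((p:ℤ) ^ d2 * p)) + (Q * ((p:ℤ) - 1)) := by ring
    linarith only [hm1, hm2, hexp, hp3]
  have hN2low : (p:ℤ) ^ m - G ≤ Q * ((p:ℤ) ^ d2 - 1) := by
    linarith only [e12, hA1low, hA2G]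
  have hN3up : Q * ((p:ℤ) ^ d3 - 1) ≤ G + (p:ℤ) ^ m := by
    linarith only [e13, hA1up, hA3nonneg]
  exact final_arith (p:ℤ) ((p:ℤ) ^ m) G (Q * ((p:ℤ) ^ d2 - 1)) (Q * ((p:ℤ) ^ d3 - 1))
    hp3 (by linarith) hGnonneg hGgeom hN2low hN3up hstep


lemma line_decomp (p q s : ℕ) (hp : p.Prime) (hq : q.Prime) (hpq : p ≠ q)
    (V : Finset ℕ) (hprod : ∏ x ∈ V, x = p ^ s * q) :
    ∃ (S : Finset ℕ) (b : ℕ), (∀ a ∈ S, p ^ a ∈ V) ∧ q * p ^ b ∈ V ∧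
      ∑ x ∈ V, x = ∑ a ∈ S, p ^ a + q * p ^ b := by
  have hqdvd : q ∣ ∏ x ∈ V, x := by rw [hprod]; exact dvd_mul_left q (p ^ s)
  obtain ⟨x₀, hx₀V, hqx₀⟩ := hq.prime.exists_mem_finset_dvd hqdvd
  have hx₀dvd : x₀ ∣ p ^ s * q := by
    rw [← hprod]; exact Finset.dvd_prod_of_mem _ hx₀V
  obtain ⟨t, ht⟩ := hqx₀
  have htdvd : t ∣ p ^ s := by
    have h1 : q * t ∣ q * p ^ s := by rw [ht] at hx₀dvd; rwa [mul_comm (p ^ s) q] at hx₀dvd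
    exact (mul_dvd_mul_iff_left hq.pos.ne').mp h1
  obtain ⟨b, hbs, htb⟩ := (Nat.dvd_prime_pow hp).mp htdvd
  subst htb
  -- every other element is a power of p
  have hpure : ∀ x ∈ V.erase x₀, ∃ a, x = p ^ a := by
    intro x hx
    have hxV := Finset.mem_of_mem_erase hx
    have hxdvdprod : x ∣ ∏ y ∈ V.erase x₀, y := Finset.dvd_prod_of_mem _ hx
    have hprod' : x₀ * ∏ y ∈ V.erase x₀, y = p ^ s * q :=
      (Finset.mul_prod_erase V (fun y => y) hx₀V).trans hprod
    have hqnd : ¬ q ∣ x := by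
      intro hqx
      have h2 : q * q ∣ x₀ * x := mul_dvd_mul ⟨p ^ b, ht.symm ▸ rfl⟩ hqx
      have h3 : x₀ * x ∣ p ^ s * q := by
        calc x₀ * x ∣ x₀ * ∏ y ∈ V.erase x₀, y := mul_dvd_mul_left _ hxdvdprod
        _ = p ^ s * q := hprod'
      have h4 : q * q ∣ p ^ s * q := h2.trans h3
      have h5 : q ∣ p ^ s := (mul_dvd_mul_iff_right hq.pos.ne').mp h4
      have := hq.dvd_of_dvd_pow h5
      exact hpq ((Nat.prime_dvd_prime_iff_eq hq hp).mp this).symm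
    have hxdvd : x ∣ p ^ s * q := by
      calc x ∣ x₀ * ∏ y ∈ V.erase x₀, y := Dvd.dvd.mul_left hxdvdprod x₀
      _ = p ^ s * q := hprod'
    have hcop : Nat.Coprime x q := ((Nat.Prime.coprime_iff_not_dvd hq).mpr hqnd).symm
    have : x ∣ p ^ s := hcop.dvd_of_dvd_mul_right hxdvd
    obtain ⟨a, _, rfl⟩ := (Nat.dvd_prime_pow hp).mp this
    exact ⟨a, rfl⟩
  have hpow : ∀ x ∈ V.erase x₀, p ^ (x.factorization p) = x := by
    intro x hx
    obtain ⟨a, rfl⟩ := hpure x hx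
    rw [hp.factorization_pow]
    simp
  refine ⟨(V.erase x₀).image (fun x => x.factorization p), b, ?_, ?_, ?_⟩
  · intro a ha
    obtain ⟨x, hx, rfl⟩ := Finset.mem_image.mp ha
    rw [hpow x hx]
    exact Finset.mem_of_mem_erase hx
  · rwa [← ht]
  · have hinj : ∀ x ∈ V.erase x₀, ∀ y ∈ V.erase x₀,
        x.factorization p = y.factorization p → x = y := by
      intro x hx y hy hxy
      rw [← hpow x hx, ← hpow y hy, hxy]
    rw [Finset.sum_image hinj]
    have : ∑ x ∈ V.erase x₀, p ^ (x.factorization p) = ∑ x ∈ V.erase x₀, x :=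
      Finset.sum_congr rfl hpow
    rw [this, ← ht]
    exact (Finset.sum_erase_add V (fun x => x) hx₀V).symm



lemma core3 (p q b1 b2 b3 T : ℕ) (S1 S2 S3 : Finset ℕ)
    (hp : 3 ≤ p) (hq : 1 ≤ q)
    (h12 : b1 ≠ b2) (h13 : b1 ≠ b3) (h23 : b2 ≠ b3)
    (hd12 : Disjoint S1 S2) (hd13 : Disjoint S1 S3) (hd23 : Disjoint S2 S3)
    (h1 : ∑ a ∈ S1, p ^ a + q * p ^ b1 = T)
    (h2 : ∑ a ∈ S2, p ^ a + q * p ^ b2 = T)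
    (h3 : ∑ a ∈ S3, p ^ a + q * p ^ b3 = T) : False := by
  rcases h12.lt_or_gt with a | a <;> rcases h13.lt_or_gt with b | b <;>
    rcases h23.lt_or_gt with c | c
  · exact core_lemma p q b1 b2 b3 T S1 S2 S3 hp hq a c hd12 hd13 h1 h2 h3
  · exact core_lemma p q b1 b3 b2 T S1 S3 S2 hp hq b c hd13 hd12 h1 h3 h2
  · omega
  · exact core_lemma p q b3 b1 b2 T S3 S1 S2 hp hq b a hd13.symm hd23.symm h3 h1 h2
  · exact core_lemma p q b2 b1 b3 T S2 S1 S3 hp hq a b hd12.symm hd23 h2 h1 h3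
  · omega
  · exact core_lemma p q b2 b3 b1 T S2 S3 S1 hp hq c b hd23 hd12.symm h2 h3 h1
  · exact core_lemma p q b3 b2 b1 T S3 S2 S1 hp hq c a hd23.symm hd13.symm h3 h2 h1

lemma magic_aux (p q s T : ℕ) (hp : p.Prime) (hq : q.Prime) (hpq : p ≠ q) (hp3 : 3 ≤ p)
    (V1 V2 V3 : Finset ℕ)
    (hd12 : Disjoint V1 V2) (hd13 : Disjoint V1 V3) (hd23 : Disjoint V2 V3)
    (hpr1 : ∏ x ∈ V1, x = p ^ s * q) (hpr2 : ∏ x ∈ V2, x = p ^ s * q)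
    (hpr3 : ∏ x ∈ V3, x = p ^ s * q)
    (hs1 : ∑ x ∈ V1, x = T) (hs2 : ∑ x ∈ V2, x = T) (hs3 : ∑ x ∈ V3, x = T) :
    False := by
  obtain ⟨S1, b1, hm1, hq1, he1⟩ := line_decomp p q s hp hq hpq V1 hpr1
  obtain ⟨S2, b2, hm2, hq2, he2⟩ := line_decomp p q s hp hq hpq V2 hpr2
  obtain ⟨S3, b3, hm3, hq3, he3⟩ := line_decomp p q s hp hq hpq V3 hpr3
  have hb : ∀ (b b' : ℕ) (V V' : Finset ℕ), Disjoint V V' → q * p ^ b ∈ V →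
      q * p ^ b' ∈ V' → b ≠ b' := by
    intro b b' V V' hd hbV hbV' heq
    subst heq
    exact (Finset.disjoint_left.mp hd hbV) hbV'
  have hS : ∀ (S S' : Finset ℕ) (V V' : Finset ℕ), Disjoint V V' →
      (∀ a ∈ S, p ^ a ∈ V) → (∀ a ∈ S', p ^ a ∈ V') → Disjoint S S' := by
    intro S S' V V' hd hSV hSV'
    rw [Finset.disjoint_left]
    intro a haS haS'
    exact (Finset.disjoint_left.mp hd (hSV a haS)) (hSV' a haS')
  exact core3 p q b1 b2 b3 T S1 S2 S3 hp3 hq.one_lt.le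
    (hb b1 b2 V1 V2 hd12 hq1 hq2) (hb b1 b3 V1 V3 hd13 hq1 hq3)
    (hb b2 b3 V2 V3 hd23 hq2 hq3)
    (hS S1 S2 V1 V2 hd12 hm1 hm2) (hS S1 S3 V1 V3 hd13 hm1 hm3)
    (hS S2 S3 V2 V3 hd23 hm2 hm3)
    (he1 ▸ hs1) (he2 ▸ hs2) (he3 ▸ hs3)


/-- In a 5×5 or 6×6 additive-multiplicative magic square of distinct positive
integers, if some entry `D` on a long diagonal satisfies `P / D = p^s * q` for
distinct primes `p, q` and `s ≥ 1`, then `p = 2`. -/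
theorem diagonal_prime_power_times_prime_forces_two
    (n : ℕ) (hn : n = 5 ∨ n = 6)
    (A : Fin n → Fin n → ℕ) (S P : ℕ)
    (hA : IsAddMulMagicSquare n A S P)
    (D : ℕ) (hD : ∃ i : Fin n, A i i = D ∨ A i i.rev = D)
    (p q s : ℕ) (hp : p.Prime) (hq : q.Prime) (hpq : p ≠ q) (hs : 1 ≤ s)
    (hPD : P = D * (p ^ s * q)) :
    p = 2 := by
  by_contra hp2
  have hp3 : 3 ≤ p := by
    have h2 := hp.two_le
    omega
  obtain ⟨hpos, hinj, hrow, hcol, hdiag, hadiag, hprow, hpcol, hpdiag, hpadiag⟩ := hA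
  obtain ⟨i, hcase⟩ := hD
  have hD0 : 0 < D := by
    rcases hcase with h | h
    · exact h ▸ hpos i i
    · exact h ▸ hpos i i.rev
  have hinj' : ∀ (a b c d : Fin n), A a b = A c d → a = c ∧ b = d := by
    intro a b c d h
    have := hinj (show (fun c : Fin n × Fin n => A c.1 c.2) (a, b) =
      (fun c : Fin n × Fin n => A c.1 c.2) (c, d) from h)
    rwa [Prod.mk.injEq] at this
  have mkline : ∀ (f : Fin n → ℕ) (i₀ : Fin n), Function.Injective f →
      (∑ j, f j = S) → (∏ j, f j = P) → f i₀ = D →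
      (∑ x ∈ (univ.erase i₀).image f, x + D = S ∧
       ∏ x ∈ (univ.erase i₀).image f, x = p ^ s * q) := by
    intro f i₀ hf hsum hprod hfD
    have hinjon : ∀ x ∈ univ.erase i₀, ∀ y ∈ univ.erase i₀, f x = f y → x = y :=
      fun x _ y _ h => hf h
    constructor
    · rw [Finset.sum_image hinjon, ← hfD, Finset.sum_erase_add _ _ (mem_univ i₀)]
      exact hsum
    · rw [Finset.prod_image hinjon]
      have h1 : (∏ j ∈ univ.erase i₀, f j) * f i₀ = P := by
        rw [Finset.prod_erase_mul _ _ (mem_univ i₀)]; exact hprod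
      rw [hfD, hPD, mul_comm _ D] at h1
      exact Nat.eq_of_mul_eq_mul_left hD0 h1
  have mkdisj : ∀ (f g : Fin n → ℕ) (i₀ i₁ : Fin n),
      (∀ j k, j ≠ i₀ → k ≠ i₁ → f j ≠ g k) →
      Disjoint ((univ.erase i₀).image f) ((univ.erase i₁).image g) := by
    intro f g i₀ i₁ h
    rw [Finset.disjoint_left]
    rintro x hx hx'
    obtain ⟨j, hj, rfl⟩ := Finset.mem_image.mp hx
    obtain ⟨k, hk, hfk⟩ := Finset.mem_image.mp hx'
    exact h j k (Finset.mem_erase.mp hj).1 (Finset.mem_erase.mp hk).1 hfk.symm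
  rcases hcase with hDi | hDi
  · -- D = A i i : use row i, column i, main diagonal
    set f1 : Fin n → ℕ := fun j => A i j with hf1
    set f2 : Fin n → ℕ := fun j => A j i with hf2
    set f3 : Fin n → ℕ := fun j => A j j with hf3
    have hf1i : Function.Injective f1 := fun a b h => ((hinj' i a i b h).2)
    have hf2i : Function.Injective f2 := fun a b h => ((hinj' a i b i h).1)
    have hf3i : Function.Injective f3 := fun a b h => ((hinj' a a b b h).1)
    obtain ⟨hsum1, hprod1⟩ := mkline f1 i hf1i (hrow i) (hprow i) hDi
    obtain ⟨hsum2, hprod2⟩ := mkline f2 i hf2i (hcol i) (hpcol i) hDi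
    obtain ⟨hsum3, hprod3⟩ := mkline f3 i hf3i hdiag hpdiag hDi
    refine magic_aux p q s (∑ x ∈ (univ.erase i).image f1, x) hp hq hpq hp3 _ _ _
      (mkdisj f1 f2 i i ?_) (mkdisj f1 f3 i i ?_) (mkdisj f2 f3 i i ?_)
      hprod1 hprod2 hprod3 rfl (by omega) (by omega) |>.elim
    · intro j k hj hk heq
      exact hk (hinj' i j k i heq).1.symm
    · intro j k hj hk heq
      exact hk (hinj' i j k k heq).1.symm
    · intro j k hj hk heq
      exact hj ((hinj' j i k k heq).1.trans (hinj' j i k k heq).2.symm)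
  · -- D = A i i.rev : use row i, column i.rev, anti-diagonal
    set f1 : Fin n → ℕ := fun j => A i j with hf1
    set f2 : Fin n → ℕ := fun j => A j i.rev with hf2
    set f3 : Fin n → ℕ := fun j => A j j.rev with hf3
    have hf1i : Function.Injective f1 := fun a b h => ((hinj' i a i b h).2)
    have hf2i : Function.Injective f2 := fun a b h => ((hinj' a i.rev b i.rev h).1)
    have hf3i : Function.Injective f3 := fun a b h => ((hinj' a a.rev b b.rev h).1)
    obtain ⟨hsum1, hprod1⟩ := mkline f1 i.rev hf1i (hrow i) (hprow i) hDi
    obtain ⟨hsum2, hprod2⟩ := mkline f2 i hf2i (hcol i.rev) (hpcol i.rev) hDi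
    obtain ⟨hsum3, hprod3⟩ := mkline f3 i hf3i hadiag hpadiag hDi
    refine magic_aux p q s (∑ x ∈ (univ.erase i.rev).image f1, x) hp hq hpq hp3 _ _ _
      (mkdisj f1 f2 i.rev i ?_) (mkdisj f1 f3 i.rev i ?_) (mkdisj f2 f3 i i ?_)
      hprod1 hprod2 hprod3 rfl (by omega) (by omega) |>.elim
    · intro j k hj hk heq
      exact hk (hinj' i j k i.rev heq).1.symm
    · intro j k hj hk heq
      exact hk (hinj' i j k k.rev heq).1.symm
    · intro j k hj hk heq
      obtain ⟨h1, h2⟩ := hinj' j i.rev k k.rev heq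
      exact hk (Fin.rev_injective h2).symm
end

section
/- There is no 5×5 additive-multiplicative magic square of distinct positive integers with magic product P whose center entry C (the entry in position (3,3)) satisfies P/C = p^s·q for distinct primes p and q and a positive integer s. -/
open Finset

namespace Nat

theorem sum_pow_mul_le_two_mul {p c X : ℕ} (hp : 2 ≤ p) {T : Finset ℕ}
    (hT : ∀ e ∈ T, p ^ e * c ≤ X) : ∑ e ∈ T, p ^ e * c ≤ 2 * X := by
  rcases T.eq_empty_or_nonempty with rfl | hne
  · simp
  set E := T.max' hne
  have hgeom : ∑ e ∈ T, p ^ e < 2 * p ^ E := by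
    rw [← add_sum_erase T _ (T.max'_mem hne), two_mul]
    exact Nat.add_lt_add_left (geomSum_lt hp fun e he => T.lt_max'_of_mem_erase_max' hne he) _
  calc ∑ e ∈ T, p ^ e * c = (∑ e ∈ T, p ^ e) * c := (sum_mul ..).symm
    _ ≤ 2 * p ^ E * c := Nat.mul_le_mul_right _ hgeom.le
    _ ≤ 2 * X := by
      rw [mul_assoc]
      exact Nat.mul_le_mul_left _ (hT E (T.max'_mem hne))

theorem sum_le_four_mul_of_dvd_prime_pow_mul_prime {p q s X : ℕ} (hp : p.Prime) (hq : q.Prime)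
    {F : Finset ℕ} (hF : ∀ x ∈ F, x ∣ p ^ s * q ∧ x ≤ X) : ∑ x ∈ F, x ≤ 4 * X := by
  let G (c : ℕ) : Finset ℕ := {e ∈ range (s + 1) | p ^ e * c ≤ X}.image (p ^ · * c)
  have hG (c : ℕ) : ∑ x ∈ G c, x ≤ 2 * X :=
    (sum_image_le_of_nonneg fun _ _ => Nat.zero_le _).trans
      (sum_pow_mul_le_two_mul hp.two_le fun _ he => (mem_filter.mp he).2)
  have hsub : F ⊆ G 1 ∪ G q := by
    intro x hx
    obtain ⟨hdvd, hle⟩ := hF x hx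
    obtain ⟨a, b, ha, hb, rfl⟩ := Nat.dvd_mul.mp hdvd
    obtain ⟨e, he, rfl⟩ := (dvd_prime_pow hp).mp ha
    have he : e ∈ range (s + 1) := mem_range.mpr (Nat.lt_succ_of_le he)
    rcases (dvd_prime hq).mp hb with rfl | rfl
    · exact mem_union_left _ (mem_image_of_mem _ (mem_filter.mpr ⟨he, hle⟩))
    · exact mem_union_right _ (mem_image_of_mem _ (mem_filter.mpr ⟨he, hle⟩))
  calc ∑ x ∈ F, x ≤ ∑ x ∈ G 1 ∪ G q, x := sum_le_sum_of_subset hsub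
    _ ≤ ∑ x ∈ G 1, x + ∑ x ∈ G q, x := by
      rw [← sum_union_inter]
      exact Nat.le_add_right _ _
    _ ≤ 4 * X := by linarith [hG 1, hG q]

end Nat

section Line

variable {ι : Type*} [Fintype ι] [DecidableEq ι] {a : ι → ℕ} {i j : ι}

theorem add_add_card_sub_two_le_sum (ha : ∀ k, 0 < a k) (hij : i ≠ j) :
    a i + a j + (Fintype.card ι - 2) ≤ ∑ k, a k := by
  have hcompl : ({i, j}ᶜ : Finset ι).card • 1 ≤ ∑ k ∈ {i, j}ᶜ, a k :=
    card_nsmul_le_sum _ _ _ fun k _ => ha k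
  rw [card_compl, card_pair hij, smul_eq_mul, mul_one] at hcompl
  rw [← sum_add_sum_compl {i, j} a, sum_pair hij]
  omega

theorem dvd_of_prod_eq_mul_of_ne {N : ℕ} (hi : 0 < a i) (h : ∏ k, a k = a i * N) (hij : i ≠ j) :
    a j ∣ N := by
  rw [← mul_prod_erase _ _ (mem_univ i)] at h
  rw [← Nat.eq_of_mul_eq_mul_left hi h]
  exact dvd_prod_of_mem _ (mem_erase.mpr ⟨hij.symm, mem_univ j⟩)

end Line

def centerLine : Fin 4 → Fin 5 → Fin 5 × Fin 5 :=
  ![fun j => (2, j), fun i => (i, 2), fun i => (i, i), fun i => (i, i.rev)]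

def offCenter : Finset (Fin 4 × Fin 5) := univ ×ˢ univ.erase 2

theorem mem_offCenter {x : Fin 4 × Fin 5} : x ∈ offCenter ↔ x.2 ≠ 2 := by
  simp [offCenter]

theorem centerLine_two (l : Fin 4) : centerLine l 2 = (2, 2) := by
  fin_cases l <;> rfl

theorem injOn_centerLine_offCenter :
    Set.InjOn (fun x : Fin 4 × Fin 5 => centerLine x.1 x.2) offCenter := by
  intro x hx y hy
  simp only [mem_coe, mem_offCenter] at hx hy
  revert x y
  decide

namespace IsAddMulMagicSquare

variable {A : Fin 5 → Fin 5 → ℕ} {S P : ℕ}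

theorem sum_centerLine (hA : IsAddMulMagicSquare 5 A S P) (l : Fin 4) :
    ∑ i, Function.uncurry A (centerLine l i) = S := by
  obtain ⟨-, -, hrow, hcol, hdiag, hanti, -⟩ := hA
  fin_cases l
  exacts [hrow 2, hcol 2, hdiag, hanti]

theorem prod_centerLine (hA : IsAddMulMagicSquare 5 A S P) (l : Fin 4) :
    ∏ i, Function.uncurry A (centerLine l i) = P := by
  obtain ⟨-, -, -, -, -, -, hrow, hcol, hdiag, hanti⟩ := hA
  fin_cases l
  exacts [hrow 2, hcol 2, hdiag, hanti]

theorem uncurry_centerLine_two (l : Fin 4) : Function.uncurry A (centerLine l 2) = A 2 2 := by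
  rw [centerLine_two]
  rfl

theorem dvd_of_centerLine (hA : IsAddMulMagicSquare 5 A S P) {N : ℕ} (hP : P = A 2 2 * N)
    (l : Fin 4) {i : Fin 5} (hi : i ≠ 2) : Function.uncurry A (centerLine l i) ∣ N := by
  refine dvd_of_prod_eq_mul_of_ne (a := fun k => Function.uncurry A (centerLine l k))
    (hA.1 _ _) ?_ hi.symm
  rw [uncurry_centerLine_two, hA.prod_centerLine l, hP]

theorem add_center_add_three_le (hA : IsAddMulMagicSquare 5 A S P) (l : Fin 4) {i : Fin 5}
    (hi : i ≠ 2) : Function.uncurry A (centerLine l i) + A 2 2 + 3 ≤ S := by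
  simpa [uncurry_centerLine_two, hA.sum_centerLine l, add_comm (Function.uncurry A _)] using
    add_add_card_sub_two_le_sum (a := fun k => Function.uncurry A (centerLine l k))
      (fun k => hA.1 _ _) hi.symm

theorem sum_offCenter_add (hA : IsAddMulMagicSquare 5 A S P) :
    ∑ x ∈ offCenter, Function.uncurry A (centerLine x.1 x.2) + 4 * A 2 2 = 4 * S := by
  have harm (l : Fin 4) :
      ∑ i ∈ univ.erase 2, Function.uncurry A (centerLine l i) + A 2 2 = S := by
    rw [← uncurry_centerLine_two (A := A) l, sum_erase_add _ _ (mem_univ 2)]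
    exact hA.sum_centerLine l
  rw [offCenter, sum_product, show 4 * A 2 2 = ∑ _l : Fin 4, A 2 2 by simp, ← sum_add_distrib]
  simp [harm]

end IsAddMulMagicSquare

/-- There is no 5×5 additive-multiplicative magic square of distinct positive
integers whose center entry `C` satisfies `P / C = p^s * q` for distinct primes
`p, q` and `s ≥ 1`. -/
theorem no_five_square_with_center_prime_power_times_prime :
    ¬ ∃ (A : Fin 5 → Fin 5 → ℕ) (S P : ℕ) (p q s : ℕ),
      IsAddMulMagicSquare 5 A S P ∧ p.Prime ∧ q.Prime ∧ p ≠ q ∧ 1 ≤ s ∧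
      P = A 2 2 * (p ^ s * q) := by
  rintro ⟨A, S, P, p, q, s, hA, hp, hq, -, -, hP⟩
  let a (x : Fin 4 × Fin 5) : ℕ := Function.uncurry A (centerLine x.1 x.2)
  have hentry : ∀ x ∈ offCenter, a x ∣ p ^ s * q ∧ a x + A 2 2 + 3 ≤ S := fun x hx =>
    ⟨hA.dvd_of_centerLine hP x.1 (mem_offCenter.mp hx),
      hA.add_center_add_three_le x.1 (mem_offCenter.mp hx)⟩
  have hbound := Nat.sum_le_four_mul_of_dvd_prime_pow_mul_prime (X := S - (A 2 2 + 3)) hp hq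
    (F := offCenter.image a) <| forall_mem_image.mpr fun x hx =>
      ⟨(hentry x hx).1, by have := (hentry x hx).2; omega⟩
  have hinj : Set.InjOn a offCenter := hA.2.1.comp_injOn injOn_centerLine_offCenter
  rw [sum_image hinj] at hbound
  have hsum : ∑ x ∈ offCenter, a x + 4 * A 2 2 = 4 * S := hA.sum_offCenter_add
  have hS := (hentry (0, 0) (by decide)).2
  omega
end

section
/- Let A be a 5×5 additive-multiplicative magic square of distinct positive integers whose magic product P has the form P = p^s·q^4 for distinct primes p and q and a positive integer s. Then p = 2 or p = 3. -/
/-!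
Write every entry as `p ^ a * q ^ b`; each line has `q`-exponents summing to `4`. No entry has
`b = 4`: the rest of its row and of its column would then be distinct powers of `p` with equal
sums, contradicting uniqueness of base-`p` expansions. Hence the cells where the `p`-exponent is
minimal have distinct `q`-exponents in `{0, 1, 2, 3}`, so there are at most four of them. Dividing
by the minimal power of `p` and reducing mod `p`, the square becomes supported on those cells with
equal line sums; some row is then zero, so all line sums vanish, which forces the support to be a
`2 × 2` rectangle with entries `±u`. The exponent constraints put `{0, 1}` on a diagonal of it,
so `q ≡ 1` and `1 + 1 ≡ 0 (mod p)`, i.e. `p = 2`.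
-/

open Finset Function

namespace Nat

theorem eq_pow_mul_pow_of_dvd {p q m n d : ℕ} (hp : p.Prime) (hq : q.Prime)
    (h : d ∣ p ^ m * q ^ n) : ∃ x y, d = p ^ x * q ^ y := by
  obtain ⟨d₁, d₂, h₁, h₂, rfl⟩ := Nat.dvd_mul.1 h
  obtain ⟨x, -, rfl⟩ := (Nat.dvd_prime_pow hp).1 h₁
  obtain ⟨y, -, rfl⟩ := (Nat.dvd_prime_pow hq).1 h₂
  exact ⟨x, y, rfl⟩

theorem factorization_pow_mul_pow_right {p q : ℕ} (hp : p.Prime) (hq : q.Prime) (hpq : p ≠ q)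
    (x y : ℕ) : (p ^ x * q ^ y).factorization q = y := by
  rw [Nat.factorization_mul (pow_ne_zero x hp.ne_zero) (pow_ne_zero y hq.ne_zero),
    hp.factorization_pow, hq.factorization_pow]
  simp [hpq]

theorem sum_eq_of_prod_pow_mul_pow_eq {ι : Type*} {p q m n : ℕ} (hp : p.Prime) (hq : q.Prime)
    (hpq : p ≠ q) (s : Finset ι) (f g : ι → ℕ)
    (h : ∏ k ∈ s, p ^ f k * q ^ g k = p ^ m * q ^ n) : ∑ k ∈ s, g k = n := by
  rw [prod_mul_distrib, prod_pow_eq_pow_sum, prod_pow_eq_pow_sum] at h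
  simpa [factorization_pow_mul_pow_right hp hq hpq] using congrArg (·.factorization q) h

theorem sum_pow_ne_of_disjoint {p : ℕ} (hp : 2 ≤ p) {E F : Finset ℕ} (hEF : Disjoint E F)
    (hE : E.Nonempty) : ∑ e ∈ E, p ^ e ≠ ∑ e ∈ F, p ^ e := by
  obtain ⟨M, hM, hle⟩ : ∃ M ∈ E ∪ F, ∀ e ∈ E ∪ F, e ≤ M :=
    ⟨_, max'_mem _ (hE.mono subset_union_left), le_max' _⟩
  have lt_of_mem {X Y : Finset ℕ} (hXY : Disjoint X Y) (hX : M ∈ X) (hY : Y ⊆ E ∪ F) :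
      ∑ e ∈ Y, p ^ e < ∑ e ∈ X, p ^ e :=
    calc ∑ e ∈ Y, p ^ e < p ^ M := Nat.geomSum_lt hp fun e he =>
          (hle e (hY he)).lt_of_ne fun h => disjoint_left.1 hXY hX (h ▸ he)
      _ ≤ ∑ e ∈ X, p ^ e := single_le_sum (fun _ _ => Nat.zero_le _) hX
  rcases mem_union.1 hM with hME | hMF
  · exact (lt_of_mem hEF hME subset_union_right).ne'
  · exact (lt_of_mem hEF.symm hMF subset_union_left).ne

theorem sum_pow_ne_sum_pow {ι κ : Type*} {p : ℕ} (hp : 2 ≤ p) {s : Finset ι} {t : Finset κ}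
    {f : ι → ℕ} {g : κ → ℕ} (hf : Set.InjOn f s) (hg : Set.InjOn g t)
    (hfg : ∀ x ∈ s, ∀ y ∈ t, f x ≠ g y) (hs : s.Nonempty) :
    ∑ x ∈ s, p ^ f x ≠ ∑ y ∈ t, p ^ g y := by
  classical
  rw [← sum_image hf, ← sum_image hg]
  refine sum_pow_ne_of_disjoint hp (disjoint_left.2 ?_) (hs.image f)
  simp only [mem_image]
  rintro _ ⟨x, hx, rfl⟩ ⟨y, hy, hxy⟩
  exact hfg x hx y hy hxy.symm

end Nat

theorem eq_one_of_pow_eq_pow_of_add_eq_one {M : Type*} [Monoid M] {a : M} {m n : ℕ}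
    (h : a ^ m = a ^ n) (hmn : m + n = 1) : a = 1 := by
  obtain ⟨rfl, rfl⟩ | ⟨rfl, rfl⟩ : m = 0 ∧ n = 1 ∨ m = 1 ∧ n = 0 := by omega
  · simpa using h.symm
  · simpa using h

theorem Finset.two_mul_card_image_le {γ α : Type*} [DecidableEq α] {s : Finset γ} {f : γ → α}
    (h : ∀ c ∈ s, ∃ c' ∈ s, c' ≠ c ∧ f c' = f c) : 2 * #(s.image f) ≤ #s := by
  refine mul_card_image_le_card s 2 fun a ha => ?_
  obtain ⟨c, hc, rfl⟩ := mem_image.1 ha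
  obtain ⟨c', hc', hne, hfc⟩ := h c hc
  exact one_lt_card.2 ⟨c, by simp [hc], c', by simp [hc', hfc], hne.symm⟩

theorem Finset.eq_product_of_card_le_four {α β : Type*} [DecidableEq α] [DecidableEq β]
    {T : Finset (α × β)} (hT : T.Nonempty) (hcard : #T ≤ 4)
    (hrow : ∀ c ∈ T, ∃ c' ∈ T, c' ≠ c ∧ c'.1 = c.1)
    (hcol : ∀ c ∈ T, ∃ c' ∈ T, c' ≠ c ∧ c'.2 = c.2) :
    #(T.image Prod.fst) = 2 ∧ #(T.image Prod.snd) = 2 ∧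
      T = T.image Prod.fst ×ˢ T.image Prod.snd := by
  have hR := two_mul_card_image_le hrow
  have hC := two_mul_card_image_le hcol
  obtain ⟨c, hc⟩ := hT
  obtain ⟨c₁, hc₁, hne₁, h₁⟩ := hrow c hc
  obtain ⟨c₂, hc₂, hne₂, h₂⟩ := hcol c hc
  have hR2 : 1 < #(T.image Prod.fst) := one_lt_card.2
    ⟨c.1, mem_image_of_mem _ hc, c₂.1, mem_image_of_mem _ hc₂,
      fun h => hne₂ (Prod.ext h.symm h₂)⟩
  have hC2 : 1 < #(T.image Prod.snd) := one_lt_card.2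
    ⟨c.2, mem_image_of_mem _ hc, c₁.2, mem_image_of_mem _ hc₁,
      fun h => hne₁ (Prod.ext h₁ h.symm)⟩
  refine ⟨by omega, by omega, eq_of_subset_of_card_le subset_product ?_⟩
  rw [card_product]
  nlinarith

theorem exists_ne_ne_zero_of_sum_eq_zero {ι M : Type*} [Fintype ι]
    [AddCommMonoid M] {f : ι → M} (hf : ∑ i, f i = 0) {j : ι} (hj : f j ≠ 0) :
    ∃ k ≠ j, f k ≠ 0 := by
  by_contra! h
  exact hj (by rwa [Fintype.sum_eq_single j h] at hf)

section Matrix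

variable {ι M : Type*} [Fintype ι] [DecidableEq ι] [AddCommMonoid M] [DecidableEq M]

theorem eq_zero_of_card_support_lt (v : ι → ι → M) {σ : M} (hrow : ∀ i, ∑ j, v i j = σ)
    (hcard : #{c : ι × ι | v c.1 c.2 ≠ 0} < Fintype.card ι) : σ = 0 := by
  obtain ⟨i, -, hi⟩ := exists_mem_notMem_of_card_lt_card
    (hcard.trans_le' card_image_le : #(image Prod.fst {c : ι × ι | v c.1 c.2 ≠ 0}) < #univ)
  rw [← hrow i]
  refine sum_eq_zero fun j _ => ?_
  by_contra hij
  exact hi (mem_image.2 ⟨(i, j), by simpa using hij, rfl⟩)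

theorem exists_support_eq_product (v : ι → ι → M) {σ : M} (hrow : ∀ i, ∑ j, v i j = σ)
    (hcol : ∀ j, ∑ i, v i j = σ) (hcard : #{c : ι × ι | v c.1 c.2 ≠ 0} ≤ 4)
    (hι : 4 < Fintype.card ι) {i₀ j₀ : ι} (h₀ : v i₀ j₀ ≠ 0) :
    ∃ R C : Finset ι, #R = 2 ∧ #C = 2 ∧ (∀ i j, v i j ≠ 0 ↔ i ∈ R ∧ j ∈ C) ∧
      (∀ i, ∑ j ∈ C, v i j = 0) ∧ ∀ j, ∑ i ∈ R, v i j = 0 := by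
  have hσ := eq_zero_of_card_support_lt v hrow (by omega)
  set T : Finset (ι × ι) := {c | v c.1 c.2 ≠ 0}
  have hmem : ∀ i j, (i, j) ∈ T ↔ v i j ≠ 0 := by simp [T]
  obtain ⟨hR, hC, hT⟩ := eq_product_of_card_le_four (T := T) ⟨_, (hmem i₀ j₀).2 h₀⟩ hcard
    (fun ⟨i, j⟩ hc => by
      obtain ⟨k, hk, hvk⟩ := exists_ne_ne_zero_of_sum_eq_zero ((hrow i).trans hσ)
        ((hmem i j).1 hc)
      exact ⟨(i, k), (hmem i k).2 hvk, by simp [hk], rfl⟩)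
    (fun ⟨i, j⟩ hc => by
      obtain ⟨k, hk, hvk⟩ := exists_ne_ne_zero_of_sum_eq_zero ((hcol j).trans hσ)
        ((hmem i j).1 hc)
      exact ⟨(k, j), (hmem k j).2 hvk, by simp [hk], rfl⟩)
  have hsupp : ∀ i j, v i j ≠ 0 ↔ i ∈ T.image Prod.fst ∧ j ∈ T.image Prod.snd := by
    intro i j
    rw [← hmem]
    nth_rw 1 [hT]
    exact mem_product
  refine ⟨_, _, hR, hC, hsupp, fun i => ?_, fun j => ?_⟩
  · rw [← hσ, ← hrow i]
    exact sum_subset (subset_univ _) fun j _ hj => not_not.1 fun h => hj ((hsupp i j).1 h).2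
  · rw [← hσ, ← hcol j]
    exact sum_subset (subset_univ _) fun i _ hi => not_not.1 fun h => hi ((hsupp i j).1 h).1

end Matrix

section Square

variable {ι : Type*} [Fintype ι] [DecidableEq ι] {A : ι → ι → ℕ}

theorem sum_row_ne_sum_col_of_eq_pow [Nontrivial ι] {p : ℕ} (hp : 2 ≤ p)
    (hA : Injective fun c : ι × ι => A c.1 c.2) {i j : ι} (e : ι → ι → ℕ)
    (hrow : ∀ k ≠ j, A i k = p ^ e i k) (hcol : ∀ k ≠ i, A k j = p ^ e k j) :
    ∑ k, A i k ≠ ∑ k, A k j := by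
  have hrow' : ∀ k ∈ univ.erase j, A i k = p ^ e i k := fun k hk => hrow k (ne_of_mem_erase hk)
  have hcol' : ∀ k ∈ univ.erase i, A k j = p ^ e k j := fun k hk => hcol k (ne_of_mem_erase hk)
  rw [← add_sum_erase _ _ (mem_univ j), ← add_sum_erase _ (A · j) (mem_univ i),
    sum_congr rfl hrow', sum_congr rfl hcol', Ne, add_right_inj]
  refine Nat.sum_pow_ne_sum_pow hp (fun k hk k' hk' h => ?_) (fun k hk k' hk' h => ?_)
    (fun k hk k' hk' h => ?_) univ_nontrivial.erase_nonempty
  · simpa using @hA (i, k) (i, k') (by simp [hrow' k hk, hrow' k' hk', h])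
  · simpa using @hA (k, j) (k', j) (by simp [hcol' k hk, hcol' k' hk', h])
  · exact ne_of_mem_erase hk
      (congrArg Prod.snd (@hA (i, k) (k', j) (by simp [hrow' k hk, hcol' k' hk', h])))

theorem exponent_lt_of_line_sums [Nontrivial ι] {p q S n : ℕ} (hp : 2 ≤ p)
    (hA : Injective fun c : ι × ι => A c.1 c.2) (hrow : ∀ i, ∑ j, A i j = S)
    (hcol : ∀ j, ∑ i, A i j = S) (a b : ι → ι → ℕ) (hab : ∀ i j, A i j = p ^ a i j * q ^ b i j)
    (hbrow : ∀ i, ∑ j, b i j = n) (hbcol : ∀ j, ∑ i, b i j = n) (i j : ι) : b i j < n := by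
  have hle : b i j ≤ n := hbrow i ▸ single_le_sum (fun _ _ => Nat.zero_le _) (mem_univ j)
  refine hle.lt_of_ne fun hn => sum_row_ne_sum_col_of_eq_pow hp hA a (fun k hk => ?_)
    (fun k hk => ?_) ((hrow i).trans (hcol j).symm)
  · have := hbrow i ▸ add_le_sum (fun _ _ => Nat.zero_le _) (mem_univ j) (mem_univ k) hk.symm
    rw [hab, show b i k = 0 by omega, pow_zero, mul_one]
  · have := hbcol j ▸ add_le_sum (f := (b · j)) (fun _ _ => Nat.zero_le _) (mem_univ i)
      (mem_univ k) hk.symm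
    rw [hab, show b k j = 0 by omega, pow_zero, mul_one]

/-- The exponent constraints put `{0, 1}` on a diagonal of the rectangle, along which the
entries agree, so `Q = 1`. -/
theorem two_eq_zero_of_rectangle {R : Type*} [CommRing R] {Q : R} (b : ι → ι → ℕ)
    {r r' x y : ι} (hr : r ≠ r') (hxy : x ≠ y)
    (hb : Set.InjOn (fun c : ι × ι => b c.1 c.2) ↑(({r, r'} : Finset ι) ×ˢ ({x, y} : Finset ι)))
    (hbrow : ∀ i, ∑ j, b i j ≤ 4) (hbcol : ∀ j, ∑ i, b i j ≤ 4)
    (hrow : Q ^ b r x + Q ^ b r y = 0) (hcolx : Q ^ b r x + Q ^ b r' x = 0)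
    (hcoly : Q ^ b r y + Q ^ b r' y = 0) : (2 : R) = 0 := by
  have hne {i j i' j' : ι} (hi : i = r ∨ i = r') (hj : j = x ∨ j = y) (hi' : i' = r ∨ i' = r')
      (hj' : j' = x ∨ j' = y) (h : (i, j) ≠ (i', j')) : b i j ≠ b i' j' :=
    fun hb' => h (hb (by simp [hi, hj]) (by simp [hi', hj']) hb')
  have pair_le {f : ι → ℕ} (hf : ∑ k, f k ≤ 4) {k k' : ι} (hk : k ≠ k') : f k + f k' ≤ 4 :=
    (add_le_sum (fun _ _ => Nat.zero_le _) (mem_univ k) (mem_univ k') hk).trans hf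
  have := pair_le (hbrow r) hxy
  have := pair_le (hbrow r') hxy
  have := pair_le (hbcol x) hr
  have := pair_le (hbcol y) hr
  have := hne (.inl rfl) (.inl rfl) (.inl rfl) (.inr rfl) (by simp [hxy])
  have := hne (.inl rfl) (.inl rfl) (.inr rfl) (.inl rfl) (by simp [hr])
  have := hne (.inl rfl) (.inl rfl) (.inr rfl) (.inr rfl) (by simp [hr])
  have := hne (.inl rfl) (.inr rfl) (.inr rfl) (.inl rfl) (by simp [hr])
  have := hne (.inl rfl) (.inr rfl) (.inr rfl) (.inr rfl) (by simp [hr])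
  have := hne (.inr rfl) (.inl rfl) (.inr rfl) (.inr rfl) (by simp [hxy])
  have hQ : Q = 1 := by
    rcases (by omega : b r x + b r' y = 1 ∨ b r y + b r' x = 1) with h | h
    · exact eq_one_of_pow_eq_pow_of_add_eq_one (by linear_combination hrow - hcoly) h
    · exact eq_one_of_pow_eq_pow_of_add_eq_one (by linear_combination hrow - hcolx) h
  rw [hQ, one_pow, one_pow] at hrow
  linear_combination hrow

end Square

theorem sum_ite_pow_eq_natCast_div {κ : Type*} [Fintype κ] {p q α S : ℕ} (hp : 0 < p)
    (f g : κ → ℕ) (hα : ∀ k, α ≤ f k) (h : ∑ k, p ^ f k * q ^ g k = S) :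
    ∑ k, (if f k = α then (q : ZMod p) ^ g k else 0) = ((S / p ^ α : ℕ) : ZMod p) := by
  have hS : S = p ^ α * ∑ k, p ^ (f k - α) * q ^ g k := by
    rw [← h, mul_sum]
    refine sum_congr rfl fun k _ => ?_
    rw [← mul_assoc, ← pow_add, Nat.add_sub_cancel' (hα k)]
  rw [hS, Nat.mul_div_cancel_left _ (pow_pos hp α)]
  push_cast
  refine sum_congr rfl fun k _ => ?_
  split_ifs with hk
  · simp [hk]
  · rw [ZMod.natCast_self, zero_pow (by have := hα k; omega), zero_mul]

theorem eq_two_of_exponent_line_sums_eq_four {p q S : ℕ} (hp : p.Prime) (hq : q.Prime) (hpq : p ≠ q)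
    {A : Fin 5 → Fin 5 → ℕ} (hA : Injective fun c : Fin 5 × Fin 5 => A c.1 c.2)
    (hrow : ∀ i, ∑ j, A i j = S) (hcol : ∀ j, ∑ i, A i j = S) (a b : Fin 5 → Fin 5 → ℕ)
    (hab : ∀ i j, A i j = p ^ a i j * q ^ b i j) (hbrow : ∀ i, ∑ j, b i j = 4)
    (hbcol : ∀ j, ∑ i, b i j = 4) : p = 2 := by
  have := Fact.mk hp
  have hb3 := exponent_lt_of_line_sums hp.two_le hA hrow hcol a b hab hbrow hbcol
  obtain ⟨c₀, -, hc₀⟩ :=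
    exists_min_image univ (fun c : Fin 5 × Fin 5 => a c.1 c.2) univ_nonempty
  set α := a c₀.1 c₀.2
  have hα : ∀ i j, α ≤ a i j := fun i j => hc₀ (i, j) (mem_univ _)
  have hQ : (q : ZMod p) ≠ 0 := by
    rw [Ne, ZMod.natCast_eq_zero_iff]
    exact fun h => hpq ((Nat.prime_dvd_prime_iff_eq hp hq).1 h)
  -- `v` is the square divided by `p ^ α`, reduced mod `p`.
  set v : Fin 5 → Fin 5 → ZMod p := fun i j => if a i j = α then (q : ZMod p) ^ b i j else 0
  have hv : ∀ i j, v i j ≠ 0 ↔ a i j = α := fun i j => by simp [v, pow_ne_zero _ hQ]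
  have hbinj : Set.InjOn (fun c : Fin 5 × Fin 5 => b c.1 c.2) {c | v c.1 c.2 ≠ 0} :=
    fun c hc c' hc' h => hA <| show A c.1 c.2 = A c'.1 c'.2 by
      rw [hab, hab, (hv _ _).1 hc, (hv _ _).1 hc', show b c.1 c.2 = b c'.1 c'.2 from h]
  have hcard : #{c : Fin 5 × Fin 5 | v c.1 c.2 ≠ 0} ≤ 4 :=
    calc _ ≤ #(range 4) := card_le_card_of_injOn _
            (fun c _ => by simpa using hb3 c.1 c.2) (by simpa using hbinj)
      _ = 4 := card_range 4
  obtain ⟨R, C, hR, hC, hsupp, hvrow, hvcol⟩ := exists_support_eq_product v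
    (fun i => sum_ite_pow_eq_natCast_div hp.pos (a i) (b i) (hα i) (by simpa [hab] using hrow i))
    (fun j => sum_ite_pow_eq_natCast_div hp.pos (a · j) (b · j) (hα · j)
      (by simpa [hab] using hcol j))
    hcard (by simp) ((hv c₀.1 c₀.2).2 rfl)
  obtain ⟨r, r', hr, rfl⟩ := card_eq_two.1 hR
  obtain ⟨x, y, hxy, rfl⟩ := card_eq_two.1 hC
  have hvQ {i j} (hi : i ∈ ({r, r'} : Finset _)) (hj : j ∈ ({x, y} : Finset _)) :
      v i j = (q : ZMod p) ^ b i j :=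
    if_pos ((hv i j).1 ((hsupp i j).2 ⟨hi, hj⟩))
  have h2 : (2 : ZMod p) = 0 := by
    refine two_eq_zero_of_rectangle (Q := (q : ZMod p)) b hr hxy
      (hbinj.mono fun c hc => (hsupp c.1 c.2).2 (mem_product.1 hc))
      (fun i => (hbrow i).le) (fun j => (hbcol j).le) ?_ ?_ ?_
    · rw [← hvQ (by simp) (by simp), ← hvQ (by simp) (by simp)]
      exact (sum_pair hxy).symm.trans (hvrow r)
    · rw [← hvQ (by simp) (by simp), ← hvQ (by simp) (by simp)]
      exact (sum_pair hr).symm.trans (hvcol x)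
    · rw [← hvQ (by simp) (by simp), ← hvQ (by simp) (by simp)]
      exact (sum_pair hr).symm.trans (hvcol y)
  exact (Nat.prime_dvd_prime_iff_eq hp Nat.prime_two).1
    ((ZMod.natCast_eq_zero_iff 2 p).1 (by exact_mod_cast h2))

theorem five_square_product_p_pow_q_four_forces_two_or_three_general
    (A : Fin 5 → Fin 5 → ℕ) (S P : ℕ)
    (hA : IsAddMulMagicSquare 5 A S P)
    (p q s : ℕ) (hp : p.Prime) (hq : q.Prime) (hpq : p ≠ q)
    (hP : P = p ^ s * q ^ 4) :
    p = 2 ∨ p = 3 := by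
  obtain ⟨-, hinj, hrow, hcol, -, -, hrowP, hcolP, -, -⟩ := hA
  have hdvd (i j : Fin 5) : A i j ∣ p ^ s * q ^ 4 := hP ▸ hrowP i ▸ dvd_prod_of_mem _ (mem_univ j)
  choose a b hab using fun i j => Nat.eq_pow_mul_pow_of_dvd hp hq (hdvd i j)
  refine .inl (eq_two_of_exponent_line_sums_eq_four hp hq hpq hinj hrow hcol a b hab
    (fun i => ?_) fun j => ?_)
  · exact Nat.sum_eq_of_prod_pow_mul_pow_eq hp hq hpq univ (a i) (b i)
      (by simpa only [hab, hP] using hrowP i)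
  · exact Nat.sum_eq_of_prod_pow_mul_pow_eq hp hq hpq univ (a · j) (b · j)
      (by simpa only [hab, hP] using hcolP j)

/-- If a 5×5 additive-multiplicative magic square of distinct positive integers
has magic product `P = p^s * q^4` with `p ≠ q` primes and `s ≥ 1`, then
`p = 2` or `p = 3`. -/
theorem five_square_product_p_pow_q_four_forces_two_or_three
    (A : Fin 5 → Fin 5 → ℕ) (S P : ℕ)
    (hA : IsAddMulMagicSquare 5 A S P)
    (p q s : ℕ) (hp : p.Prime) (hq : q.Prime) (hpq : p ≠ q) (hs : 1 ≤ s)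
    (hP : P = p ^ s * q ^ 4) :
    p = 2 ∨ p = 3 :=
  five_square_product_p_pow_q_four_forces_two_or_three_general A S P hA p q s hp hq hpq hP
end
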